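/- arXiv:1612.08310 — 4 statements merged into one kernel-verified Lean document; each statement's English description precedes it below -/
import Mathlib

section
/- Let 0 < α < σ < 1 with α, σ real. There exists a constant C > 0 depending only on d, α, σ such that for every u : ℝ^d → ℝ with [u]_{σ;ℝ^d} < ∞, one has [u]_{σ;ℝ^d} ≤ C sup_{r>0} sup_{x_0∈ℝ^d} r^{α−σ} [u]_{Λ^α(B_r(x_0))} ≤ C sup_{r>0} sup_{x_0∈ℝ^d} r^{α−σ} [u]_{α;B_r(x_0)}. -/
open MeasureTheory Metric Filter Set
open scoped ENNReal Topology

noncomputable section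

/-- Hölder seminorm `[u]_{γ;Ω}` (valued in `ℝ≥0∞`). -/
def holderSemi {E F : Type*} [NormedAddCommGroup E] [NormedAddCommGroup F]
    (γ : ℝ) (Ω : Set E) (u : E → F) : ℝ≥0∞ :=
  ⨆ (x : E) (_ : x ∈ Ω) (y : E) (_ : y ∈ Ω) (_ : x ≠ y),
    ENNReal.ofReal (‖u x - u y‖ / ‖x - y‖ ^ γ)

/-- Zygmund seminorm `[u]_{Λ^α(Ω)}` (valued in `ℝ≥0∞`). -/
def zygmundSemi {E : Type*} [NormedAddCommGroup E] (α : ℝ) (Ω : Set E) (u : E → ℝ) : ℝ≥0∞ :=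
  ⨆ (x : E) (h : E) (_ : h ≠ 0) (_ : x ∈ Ω) (_ : x + h ∈ Ω) (_ : x - h ∈ Ω),
    ENNReal.ofReal (|u (x + h) + u (x - h) - 2 * u x| / ‖h‖ ^ α)

/-- The `L_∞` norm of `u` on `Ω` (valued in `ℝ≥0∞`). -/
def eSupNorm {E : Type*} (Ω : Set E) (u : E → ℝ) : ℝ≥0∞ :=
  ⨆ (x : E) (_ : x ∈ Ω), ENNReal.ofReal |u x|

/-- A Dini function: nonnegative, nondecreasing on `(0,∞)`, with `∫_0^1 ω(r)/r dr < ∞`. -/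
def IsDini (ω : ℝ → ℝ) : Prop :=
  (∀ r, 0 < r → 0 ≤ ω r) ∧ MonotoneOn ω (Set.Ioi (0:ℝ)) ∧
    IntegrableOn (fun r => ω r / r) (Set.Ioc (0:ℝ) 1)

/-- A single Hölder quotient is below the Hölder seminorm. -/
lemma le_holderSemi {E : Type*} [NormedAddCommGroup E] {γ : ℝ} {Ω : Set E} {u : E → ℝ}
    {a b : E} (ha : a ∈ Ω) (hb : b ∈ Ω) (hab : a ≠ b) :
    ENNReal.ofReal (|u a - u b| / ‖a - b‖ ^ γ) ≤ holderSemi γ Ω u := by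
  rw [holderSemi, ← Real.norm_eq_abs]
  exact le_iSup_of_le a (le_iSup_of_le ha (le_iSup_of_le b (le_iSup_of_le hb
    (le_iSup_of_le hab le_rfl))))

/-- Zygmund seminorm is at most twice the Hölder seminorm (same exponent, same set). -/
lemma zygmundSemi_le_two_mul_holderSemi {E : Type*} [NormedAddCommGroup E]
    (α : ℝ) (Ω : Set E) (u : E → ℝ) :
    zygmundSemi α Ω u ≤ 2 * holderSemi α Ω u := by
  rw [zygmundSemi]
  refine iSup_le fun x => iSup_le fun h => iSup_le fun hh => iSup_le fun hx =>
    iSup_le fun hxp => iSup_le fun hxm => ?_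
  have hB : (0:ℝ) < ‖h‖ ^ α := Real.rpow_pos_of_pos (norm_pos_iff.mpr hh) α
  have key : |u (x + h) + u (x - h) - 2 * u x| ≤ |u (x + h) - u x| + |u (x - h) - u x| := by
    have e : u (x + h) + u (x - h) - 2 * u x = (u (x + h) - u x) + (u (x - h) - u x) := by ring
    rw [e]; exact abs_add_le _ _
  have step1 : ENNReal.ofReal (|u (x + h) + u (x - h) - 2 * u x| / ‖h‖ ^ α) ≤
      ENNReal.ofReal (|u (x + h) - u x| / ‖h‖ ^ α) +
      ENNReal.ofReal (|u (x - h) - u x| / ‖h‖ ^ α) := by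
    rw [← ENNReal.ofReal_add (by positivity) (by positivity)]
    refine ENNReal.ofReal_le_ofReal ?_
    rw [← add_div]
    exact div_le_div_of_nonneg_right key hB.le
  have h1 : ENNReal.ofReal (|u (x + h) - u x| / ‖h‖ ^ α) ≤ holderSemi α Ω u := by
    have e1 : x + h - x = h := by abel
    have := le_holderSemi (γ := α) (u := u) hxp hx (by
      intro hc; exact hh (by simpa using congrArg (· - x) hc))
    rwa [e1] at this
  have h2 : ENNReal.ofReal (|u (x - h) - u x| / ‖h‖ ^ α) ≤ holderSemi α Ω u := by
    have e1 : x - h - x = -h := by abel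
    have := le_holderSemi (γ := α) (u := u) hxm hx (by
      intro hc; exact hh (by simpa [neg_eq_zero] using congrArg (· - x) hc))
    rwa [e1, norm_neg] at this
  calc ENNReal.ofReal (|u (x + h) + u (x - h) - 2 * u x| / ‖h‖ ^ α)
      ≤ _ + _ := step1
    _ ≤ holderSemi α Ω u + holderSemi α Ω u := add_le_add h1 h2
    _ = 2 * holderSemi α Ω u := (two_mul _).symm

set_option maxHeartbeats 1000000 in
/-- Campanato-type characterization of the `C^σ` seminorm, `σ ∈ (0,1)`. -/
theorem holder_le_zygmund_series_order_lt_one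
    (d : ℕ) (hd : 1 ≤ d) (α σ : ℝ) (hα : 0 < α) (hασ : α < σ) (hσ : σ < 1) :
    ∃ C : ℝ, 0 < C ∧
      ∀ u : EuclideanSpace ℝ (Fin d) → ℝ,
        holderSemi σ (Set.univ : Set (EuclideanSpace ℝ (Fin d))) u < ⊤ →
        holderSemi σ (Set.univ : Set (EuclideanSpace ℝ (Fin d))) u ≤
            ENNReal.ofReal C *
              ⨆ (r : ℝ) (_ : 0 < r) (x0 : EuclideanSpace ℝ (Fin d)),
                ENNReal.ofReal (r ^ (α - σ)) * zygmundSemi α (ball x0 r) u ∧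
          (⨆ (r : ℝ) (_ : 0 < r) (x0 : EuclideanSpace ℝ (Fin d)),
              ENNReal.ofReal (r ^ (α - σ)) * zygmundSemi α (ball x0 r) u) ≤
            ENNReal.ofReal C *
              ⨆ (r : ℝ) (_ : 0 < r) (x0 : EuclideanSpace ℝ (Fin d)),
                ENNReal.ofReal (r ^ (α - σ)) * holderSemi α (ball x0 r) u := by
  have hq0 : (0:ℝ) < (2:ℝ) ^ (σ - 1) := Real.rpow_pos_of_pos two_pos _
  have hq1 : (2:ℝ) ^ (σ - 1) < 1 :=
    Real.rpow_lt_one_of_one_lt_of_neg one_lt_two (by linarith)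
  set q : ℝ := (2:ℝ) ^ (σ - 1) with hqdef
  set C : ℝ := 2 + 2 * (1 - q)⁻¹ with hCdef
  have hC : 0 < C := by
    have : 0 < (1 - q)⁻¹ := inv_pos.mpr (by linarith)
    rw [hCdef]; linarith
  refine ⟨C, hC, fun u hu => ?_⟩
  constructor
  · -- first inequality: Hölder ≤ C * Zygmund sup
    set M : ℝ≥0∞ := ⨆ (r : ℝ) (_ : 0 < r) (x0 : EuclideanSpace ℝ (Fin d)),
      ENNReal.ofReal (r ^ (α - σ)) * zygmundSemi α (ball x0 r) u with hMdef
    by_cases hMtop : M = ⊤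
    · rw [hMtop, ENNReal.mul_top (by simp [ENNReal.ofReal_eq_zero]; linarith)]
      exact le_top
    set M' : ℝ := M.toReal with hM'def
    set H' : ℝ := (holderSemi σ (Set.univ : Set (EuclideanSpace ℝ (Fin d))) u).toReal with hH'def
    have hM'0 : 0 ≤ M' := ENNReal.toReal_nonneg
    -- pointwise Hölder bound
    have hHpt : ∀ a b : EuclideanSpace ℝ (Fin d), |u a - u b| ≤ H' * ‖a - b‖ ^ σ := by
      intro a b
      rcases eq_or_ne a b with rfl | hab
      · simp [Real.zero_rpow (by linarith : σ ≠ 0)]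
      · have h1 := le_holderSemi (γ := σ) (u := u) (mem_univ a) (mem_univ b) hab
        have h2 : |u a - u b| / ‖a - b‖ ^ σ ≤ H' :=
          (ENNReal.ofReal_le_iff_le_toReal hu.ne).mp h1
        have hpos : (0:ℝ) < ‖a - b‖ ^ σ :=
          Real.rpow_pos_of_pos (norm_pos_iff.mpr (sub_ne_zero.mpr hab)) σ
        exact (div_le_iff₀ hpos).mp h2
    -- pointwise Zygmund bound
    have hZpt : ∀ (m h : EuclideanSpace ℝ (Fin d)), h ≠ 0 →
        |u (m + h) + u (m - h) - 2 * u m| ≤ 2 * M' * ‖h‖ ^ σ := by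
      intro m h hh
      have hhn : (0:ℝ) < ‖h‖ := norm_pos_iff.mpr hh
      set r : ℝ := 2 * ‖h‖ with hrdef
      have hr0 : (0:ℝ) < r := by positivity
      have hmem1 : m ∈ ball m r := mem_ball_self hr0
      have hmem2 : m + h ∈ ball m r := by
        rw [mem_ball, dist_eq_norm]
        have e : m + h - m = h := by abel
        rw [e]; rw [hrdef]; linarith
      have hmem3 : m - h ∈ ball m r := by
        rw [mem_ball, dist_eq_norm]
        have : m - h - m = -h := by abel
        rw [this, norm_neg]; linarith
      have hterm : ENNReal.ofReal (|u (m + h) + u (m - h) - 2 * u m| / ‖h‖ ^ α) ≤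
          zygmundSemi α (ball m r) u := by
        rw [zygmundSemi]
        exact le_iSup_of_le m (le_iSup_of_le h (le_iSup_of_le hh (le_iSup_of_le hmem1
          (le_iSup_of_le hmem2 (le_iSup_of_le hmem3 le_rfl)))))
      have hz : ENNReal.ofReal (r ^ (α - σ)) * zygmundSemi α (ball m r) u ≤ M := by
        rw [hMdef]
        exact le_iSup_of_le r (le_iSup_of_le hr0 (le_iSup_of_le m le_rfl))
      have hcomb : ENNReal.ofReal (r ^ (α - σ) * (|u (m + h) + u (m - h) - 2 * u m| / ‖h‖ ^ α))
          ≤ M := by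
        rw [ENNReal.ofReal_mul (by positivity)]
        exact (mul_le_mul_right hterm _).trans hz
      have hreal : r ^ (α - σ) * (|u (m + h) + u (m - h) - 2 * u m| / ‖h‖ ^ α) ≤ M' :=
        (ENNReal.ofReal_le_iff_le_toReal hMtop).mp hcomb
      set A : ℝ := |u (m + h) + u (m - h) - 2 * u m| with hAdef
      set B : ℝ := ‖h‖ ^ α with hBdef
      have hB0 : 0 < B := Real.rpow_pos_of_pos hhn α
      have hP0 : 0 < r ^ (α - σ) := Real.rpow_pos_of_pos hr0 _
      have hA1 : A = (r ^ (α - σ) * (A / B)) * (B / r ^ (α - σ)) := by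
        field_simp
      have hA2 : A ≤ M' * (B / r ^ (α - σ)) := by
        rw [hA1]
        exact mul_le_mul_of_nonneg_right hreal (by positivity)
      have hBP : B / r ^ (α - σ) = ‖h‖ ^ α * r ^ (σ - α) := by
        rw [hBdef, div_eq_mul_inv, ← Real.rpow_neg hr0.le]
        congr 1; ring
      have hrpow : r ^ (σ - α) = (2:ℝ) ^ (σ - α) * ‖h‖ ^ (σ - α) := by
        rw [hrdef, Real.mul_rpow (by norm_num) hhn.le]
      have hhs : ‖h‖ ^ α * ‖h‖ ^ (σ - α) = ‖h‖ ^ σ := by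
        rw [← Real.rpow_add hhn]; congr 1; ring
      have h2le : (2:ℝ) ^ (σ - α) ≤ 2 := by
        calc (2:ℝ) ^ (σ - α) ≤ (2:ℝ) ^ (1:ℝ) :=
              Real.rpow_le_rpow_of_exponent_le one_le_two (by linarith)
          _ = 2 := Real.rpow_one 2
      have hfin : M' * (B / r ^ (α - σ)) ≤ 2 * M' * ‖h‖ ^ σ := by
        rw [hBP, hrpow]
        have e : ‖h‖ ^ α * ((2:ℝ) ^ (σ - α) * ‖h‖ ^ (σ - α)) =
            (2:ℝ) ^ (σ - α) * ‖h‖ ^ σ := by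
          rw [mul_comm ((2:ℝ) ^ (σ - α)) _, ← mul_assoc, hhs]; ring
        rw [e]
        have hns : (0:ℝ) ≤ ‖h‖ ^ σ := Real.rpow_nonneg (norm_nonneg _) σ
        have hmul := mul_le_mul_of_nonneg_right h2le (mul_nonneg hM'0 hns)
        nlinarith [hmul]
      exact hA2.trans hfin
    -- main estimate for a fixed pair
    have main : ∀ x y : EuclideanSpace ℝ (Fin d), x ≠ y →
        ENNReal.ofReal (‖u x - u y‖ / ‖x - y‖ ^ σ) ≤ ENNReal.ofReal C * M := by
      intro x y hxy
      set D : ℝ := ‖y - x‖ with hDdef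
      have hD : 0 < D := norm_pos_iff.mpr (sub_ne_zero.mpr hxy.symm)
      set v : EuclideanSpace ℝ (Fin d) := y - x with hvdef
      have hv : v ≠ 0 := sub_ne_zero.mpr hxy.symm
      set yseq : ℕ → EuclideanSpace ℝ (Fin d) := fun n => x + ((2:ℝ) ^ n) • v with hyseq
      have hseq0 : yseq 0 = y := by simp [hyseq, hvdef]
      have hseq3 : ∀ n, yseq n - x = ((2:ℝ) ^ n) • v := by intro n; simp [hyseq]
      have hseq1 : ∀ n, yseq n + ((2:ℝ) ^ n) • v = yseq (n + 1) := by
        intro n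
        have e : ((2:ℝ) ^ (n + 1)) • v = ((2:ℝ) ^ n) • v + ((2:ℝ) ^ n) • v := by
          rw [← add_smul]; congr 1; ring
        simp only [hyseq, e]; abel
      have hseq2 : ∀ n, yseq n - ((2:ℝ) ^ n) • v = x := by
        intro n; simp only [hyseq]; abel
      have hsmne : ∀ n : ℕ, ((2:ℝ) ^ n) • v ≠ 0 :=
        fun n => smul_ne_zero (pow_ne_zero n two_ne_zero) hv
      have hnormsm : ∀ n : ℕ, ‖((2:ℝ) ^ n) • v‖ = (2:ℝ) ^ n * D := by
        intro n
        rw [norm_smul, Real.norm_eq_abs, abs_of_pos (pow_pos two_pos n), hDdef]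
      -- error bound per step
      have hE : ∀ n : ℕ, |u (yseq (n + 1)) + u x - 2 * u (yseq n)| ≤
          2 * M' * ((2:ℝ) ^ n * D) ^ σ := by
        intro n
        have := hZpt (yseq n) (((2:ℝ) ^ n) • v) (hsmne n)
        rwa [hseq1 n, hseq2 n, hnormsm n] at this
      -- exponent arithmetic
      have hqn : ∀ n : ℕ, ((1:ℝ)/2) ^ n * ((2:ℝ) ^ n * D) ^ σ = q ^ n * D ^ σ := by
        intro n
        rw [Real.mul_rpow (by positivity) hD.le]
        have h1 : ((2:ℝ) ^ n) ^ σ = (2:ℝ) ^ ((n:ℝ) * σ) := by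
          rw [← Real.rpow_natCast 2 n, ← Real.rpow_mul (by norm_num)]
        have h2 : ((1:ℝ)/2) ^ n = (2:ℝ) ^ (-(n:ℝ)) := by
          rw [Real.rpow_neg (by norm_num), Real.rpow_natCast]
          simp [one_div]
        have h3 : q ^ n = (2:ℝ) ^ ((σ - 1) * (n:ℝ)) := by
          rw [hqdef, ← Real.rpow_natCast ((2:ℝ) ^ (σ - 1)) n,
            ← Real.rpow_mul (by norm_num)]
        rw [h1, h2, h3, ← mul_assoc, ← Real.rpow_add two_pos]
        congr 2
        ring
      -- inductive claim
      have claim : ∀ n : ℕ, |u y - u x| ≤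
          ((1:ℝ)/2) ^ n * |u (yseq n) - u x| +
            2 * M' * D ^ σ * ∑ k ∈ Finset.range n, q ^ k := by
        intro n
        induction n with
        | zero => simp [hseq0]
        | succ n ih =>
          have hstep : |u (yseq n) - u x| ≤
              (|u (yseq (n + 1)) - u x| + |u (yseq (n + 1)) + u x - 2 * u (yseq n)|) / 2 := by
            have e : u (yseq n) - u x =
                ((u (yseq (n + 1)) - u x) - (u (yseq (n + 1)) + u x - 2 * u (yseq n))) / 2 := by
              ring
            calc |u (yseq n) - u x| =
                |(u (yseq (n + 1)) - u x) - (u (yseq (n + 1)) + u x - 2 * u (yseq n))| / 2 := by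
                  rw [e, abs_div, abs_two]
              _ ≤ _ := by gcongr; exact abs_sub _ _
          have hpn : (0:ℝ) ≤ ((1:ℝ)/2) ^ n := by positivity
          have h1 : ((1:ℝ)/2) ^ n * |u (yseq n) - u x| ≤
              ((1:ℝ)/2) ^ (n + 1) * |u (yseq (n + 1)) - u x| +
              ((1:ℝ)/2) ^ (n + 1) * |u (yseq (n + 1)) + u x - 2 * u (yseq n)| := by
            have := mul_le_mul_of_nonneg_left hstep hpn
            rw [pow_succ]
            nlinarith [this]
          have h2 : ((1:ℝ)/2) ^ (n + 1) * |u (yseq (n + 1)) + u x - 2 * u (yseq n)| ≤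
              M' * (q ^ n * D ^ σ) := by
            have hE' := mul_le_mul_of_nonneg_left (hE n) (by positivity :
              (0:ℝ) ≤ ((1:ℝ)/2) ^ (n + 1))
            have e : ((1:ℝ)/2) ^ (n + 1) * (2 * M' * ((2:ℝ) ^ n * D) ^ σ) =
                M' * (((1:ℝ)/2) ^ n * ((2:ℝ) ^ n * D) ^ σ) := by
              rw [pow_succ]; ring
            rw [e, hqn n] at hE'
            exact hE'
          have hpos : (0:ℝ) ≤ M' * (q ^ n * D ^ σ) := by positivity
          rw [Finset.sum_range_succ]
          linarith [ih, h1, h2]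
      -- Hölder bound on the remainder
      have hrem : ∀ n : ℕ, |u (yseq n) - u x| ≤ H' * ((2:ℝ) ^ n * D) ^ σ := by
        intro n
        have := hHpt (yseq n) x
        rwa [hseq3 n, hnormsm n] at this
      have hsum : ∀ n : ℕ, ∑ k ∈ Finset.range n, q ^ k ≤ (1 - q)⁻¹ := by
        intro n
        exact (Summable.sum_le_tsum (Finset.range n) (fun i _ => pow_nonneg hq0.le i)
          (summable_geometric_of_lt_one hq0.le hq1)).trans_eq
          (tsum_geometric_of_lt_one hq0.le hq1)
      have hbound : ∀ n : ℕ, |u y - u x| ≤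
          q ^ n * (H' * D ^ σ) + 2 * M' * D ^ σ * (1 - q)⁻¹ := by
        intro n
        have h1 := claim n
        have h2 : ((1:ℝ)/2) ^ n * |u (yseq n) - u x| ≤ q ^ n * (H' * D ^ σ) := by
          have := mul_le_mul_of_nonneg_left (hrem n)
            (by positivity : (0:ℝ) ≤ ((1:ℝ)/2) ^ n)
          calc ((1:ℝ)/2) ^ n * |u (yseq n) - u x| ≤
              ((1:ℝ)/2) ^ n * (H' * ((2:ℝ) ^ n * D) ^ σ) := this
            _ = H' * (((1:ℝ)/2) ^ n * ((2:ℝ) ^ n * D) ^ σ) := by ring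
            _ = H' * (q ^ n * D ^ σ) := by rw [hqn n]
            _ = q ^ n * (H' * D ^ σ) := by ring
        have h3 : 2 * M' * D ^ σ * ∑ k ∈ Finset.range n, q ^ k ≤
            2 * M' * D ^ σ * (1 - q)⁻¹ :=
          mul_le_mul_of_nonneg_left (hsum n) (by positivity)
        linarith
      have hlim : Tendsto (fun n : ℕ => q ^ n * (H' * D ^ σ) + 2 * M' * D ^ σ * (1 - q)⁻¹)
          atTop (𝓝 (0 * (H' * D ^ σ) + 2 * M' * D ^ σ * (1 - q)⁻¹)) :=
        ((tendsto_pow_atTop_nhds_zero_of_lt_one hq0.le hq1).mul_const _).add_const _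
      have hfinal : |u y - u x| ≤ 2 * M' * D ^ σ * (1 - q)⁻¹ := by
        have := ge_of_tendsto' hlim hbound
        simpa using this
      -- conclude
      have hDσ : (0:ℝ) < D ^ σ := Real.rpow_pos_of_pos hD σ
      have hreal : ‖u x - u y‖ / ‖x - y‖ ^ σ ≤ C * M' := by
        rw [Real.norm_eq_abs, abs_sub_comm, norm_sub_rev]
        rw [div_le_iff₀ hDσ]
        have hstep2 : 2 * M' * D ^ σ * (1 - q)⁻¹ ≤ C * M' * D ^ σ := by
          have h2q : 2 * (1 - q)⁻¹ ≤ C := by rw [hCdef]; linarith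
          nlinarith [mul_nonneg hM'0 hDσ.le]
        exact hfinal.trans hstep2
      calc ENNReal.ofReal (‖u x - u y‖ / ‖x - y‖ ^ σ) ≤ ENNReal.ofReal (C * M') :=
            ENNReal.ofReal_le_ofReal hreal
        _ = ENNReal.ofReal C * ENNReal.ofReal M' := ENNReal.ofReal_mul hC.le
        _ = ENNReal.ofReal C * M := by rw [hM'def, ENNReal.ofReal_toReal hMtop]
    rw [holderSemi]
    exact iSup_le fun x => iSup_le fun _ => iSup_le fun y => iSup_le fun _ =>
      iSup_le fun hxy => main x y hxy
  · -- second inequality: Zygmund sup ≤ C * Hölder sup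
    refine iSup_le fun r => iSup_le fun hr => iSup_le fun x0 => ?_
    have h2C : (2:ℝ≥0∞) ≤ ENNReal.ofReal C := by
      have : ((2:ℝ≥0∞)) = ENNReal.ofReal 2 := by norm_num
      rw [this]
      refine ENNReal.ofReal_le_ofReal ?_
      have : 0 < (1 - q)⁻¹ := inv_pos.mpr (by linarith)
      rw [hCdef]; linarith
    have hle : ENNReal.ofReal (r ^ (α - σ)) * holderSemi α (ball x0 r) u ≤
        ⨆ (r : ℝ) (_ : 0 < r) (x0 : EuclideanSpace ℝ (Fin d)),
          ENNReal.ofReal (r ^ (α - σ)) * holderSemi α (ball x0 r) u :=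
      le_iSup_of_le r (le_iSup_of_le hr (le_iSup_of_le x0 le_rfl))
    calc ENNReal.ofReal (r ^ (α - σ)) * zygmundSemi α (ball x0 r) u
        ≤ ENNReal.ofReal (r ^ (α - σ)) * (2 * holderSemi α (ball x0 r) u) :=
          mul_le_mul_right (zygmundSemi_le_two_mul_holderSemi α _ u) _
      _ = 2 * (ENNReal.ofReal (r ^ (α - σ)) * holderSemi α (ball x0 r) u) := by ring
      _ ≤ 2 * ⨆ (r : ℝ) (_ : 0 < r) (x0 : EuclideanSpace ℝ (Fin d)),
            ENNReal.ofReal (r ^ (α - σ)) * holderSemi α (ball x0 r) u :=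
          mul_le_mul_right hle _
      _ ≤ ENNReal.ofReal C * _ := mul_le_mul_left h2C _
end
end

section
/- Let α ∈ (0,1). There exists a constant C > 0 depending only on d and α such that for every everywhere differentiable u : ℝ^d → ℝ, every positive integer i, and all x, x' ∈ ℝ^d with 2^{−i−1} ≤ |x − x'| < 2^{−i}, one has |∇u(x) − ∇u(x')| ≤ C Σ_{k=i}^∞ 2^{k(1−α)} sup_{x_0∈ℝ^d} [u]_{Λ^α(B_{2^{−k}}(x_0))}. In particular, if Σ_{k=0}^∞ 2^{k(1−α)} sup_{x_0∈ℝ^d} [u]_{Λ^α(B_{2^{−k}}(x_0))} < ∞, then ∇u is uniformly continuous on ℝ^d. -/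
open MeasureTheory Metric Filter Set
open scoped ENNReal Topology

noncomputable section

/-!
For a direction `e` with `‖e‖ ≤ 1` let `D_t u(p) = (u(p + t e) - u(p - t e)) / (2t)`.
The difference `D_t u(p) - D_{t/2} u(p)` is a difference of two second differences with step
`t e / 2`, divided by `2t`, so it is at most `t^(α-1)` times the Zygmund seminorm at scale `t`;
telescoping over the scales `t / 2^n` bounds `|∂_e u(p) - D_t u(p)|` by the series.
If `‖x - x'‖ < t`, then `D_t u(x) - D_t u(x')` is a difference of two second differences centred
at the midpoint of `x` and `x'` with steps `(x - x') / 2 ± t e`, hence at most `4 t^(α-1)` times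
the seminorm at scale `t`. Choosing `e` in the direction of `∇u(x) - ∇u(x')` gives the estimate
with `C = 6`, and uniform continuity follows because the tails of a convergent series tend to 0.
-/

open scoped RealInnerProductSpace

section SecondDifference

variable {E : Type*} [NormedAddCommGroup E] {α M r : ℝ} {u : E → ℝ}

lemma abs_secondDiff_le_of_zygmundSemi_le (hα : 0 < α) {Ω : Set E} (hM : 0 ≤ M)
    (hZ : zygmundSemi α Ω u ≤ ENNReal.ofReal M) {x h : E} (hx : x ∈ Ω) (hxh : x + h ∈ Ω)
    (hxh' : x - h ∈ Ω) :
    |u (x + h) + u (x - h) - 2 * u x| ≤ ‖h‖ ^ α * M := by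
  rcases eq_or_ne h 0 with rfl | hh
  · simp [Real.zero_rpow hα.ne', ← two_mul]
  have hpos : 0 < ‖h‖ ^ α := Real.rpow_pos_of_pos (norm_pos_iff.mpr hh) α
  have hq : ENNReal.ofReal (|u (x + h) + u (x - h) - 2 * u x| / ‖h‖ ^ α)
      ≤ ENNReal.ofReal M := by
    refine le_trans ?_ hZ
    unfold zygmundSemi
    exact le_iSup_of_le x <| le_iSup_of_le h <| le_iSup_of_le hh <| le_iSup_of_le hx <|
      le_iSup_of_le hxh <| le_iSup_of_le hxh' le_rfl
  rw [ENNReal.ofReal_le_ofReal_iff hM, div_le_iff₀ hpos] at hq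
  linarith

lemma abs_secondDiff_le_of_norm_lt (hα : 0 < α) (hM : 0 ≤ M)
    (hZ : ⨆ x0 : E, zygmundSemi α (ball x0 r) u ≤ ENNReal.ofReal M) (x : E) {h : E}
    (hh : ‖h‖ < r) :
    |u (x + h) + u (x - h) - 2 * u x| ≤ ‖h‖ ^ α * M := by
  refine abs_secondDiff_le_of_zygmundSemi_le hα hM ((le_iSup _ x).trans hZ)
    (mem_ball_self ((norm_nonneg h).trans_lt hh)) ?_ ?_
  · rwa [mem_ball, dist_eq_norm, add_sub_cancel_left]
  · rwa [mem_ball, dist_eq_norm, sub_sub_cancel_left, norm_neg]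

/-- Splitting a second difference into three with half the step allows steps up to twice the
radius of the balls. -/
lemma abs_secondDiff_le_of_norm_lt_two_mul [NormedSpace ℝ E] (hα : 0 < α) (hM : 0 ≤ M)
    (hZ : ⨆ x0 : E, zygmundSemi α (ball x0 r) u ≤ ENNReal.ofReal M) (x : E) {h : E}
    (hh : ‖h‖ < 2 * r) :
    |u (x + h) + u (x - h) - 2 * u x| ≤ 4 * r ^ α * M := by
  set w : E := (2⁻¹ : ℝ) • h
  have hwr : ‖w‖ < r := by
    rw [norm_smul, Real.norm_of_nonneg (by norm_num)]
    linarith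
  have hsplit : u (x + h) + u (x - h) - 2 * u x =
      (u (x + w + w) + u (x + w - w) - 2 * u (x + w))
      + (u (x - w + w) + u (x - w - w) - 2 * u (x - w))
      + 2 * (u (x + w) + u (x - w) - 2 * u x) := by
    have h1 : x + w + w = x + h := by simp only [w]; module
    have h2 : x - w - w = x - h := by simp only [w]; module
    rw [h1, h2, add_sub_cancel_right, sub_add_cancel]
    ring
  have hstep : ∀ y, |u (y + w) + u (y - w) - 2 * u y| ≤ r ^ α * M := fun y =>
    (abs_secondDiff_le_of_norm_lt hα hM hZ y hwr).trans <| by gcongr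
  rw [hsplit]
  calc _ ≤ |u (x + w + w) + u (x + w - w) - 2 * u (x + w)|
        + |u (x - w + w) + u (x - w - w) - 2 * u (x - w)|
        + 2 * |u (x + w) + u (x - w) - 2 * u x| := by
        refine (abs_add_le _ _).trans ?_
        rw [abs_mul, abs_two]
        gcongr
        exact abs_add_le _ _
    _ ≤ r ^ α * M + r ^ α * M + 2 * (r ^ α * M) := by gcongr <;> apply hstep
    _ = 4 * r ^ α * M := by ring

end SecondDifference

section SymmetricQuotient

variable {E : Type*} [NormedAddCommGroup E] [NormedSpace ℝ E] {α M t : ℝ} {u : E → ℝ}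

def symmQuot (u : E → ℝ) (p e : E) (t : ℝ) : ℝ :=
  (u (p + t • e) - u (p - t • e)) / (2 * t)

lemma tendsto_symmQuot {p : E} (hu : DifferentiableAt ℝ u p) (e : E) :
    Tendsto (symmQuot u p e) (𝓝[≠] 0) (𝓝 (fderiv ℝ u p e)) := by
  have hline (v : E) : HasDerivAt (fun s : ℝ => u (p + s • v)) (fderiv ℝ u p v) 0 := by
    have hu' : HasFDerivAt u (fderiv ℝ u p) (p + (0 : ℝ) • v) := by
      simpa using hu.hasFDerivAt
    have hpath : HasDerivAt (fun s : ℝ => p + s • v) v 0 := by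
      simpa using ((hasDerivAt_id (0 : ℝ)).smul_const v).const_add p
    exact hu'.comp_hasDerivAt 0 hpath
  have hminus : HasDerivAt (fun s : ℝ => u (p - s • e)) (-fderiv ℝ u p e) 0 := by
    simpa [smul_neg, ← sub_eq_add_neg] using hline (-e)
  have hslope := hasDerivAt_iff_tendsto_slope.mp ((hline e).sub hminus)
  have hlim : (fderiv ℝ u p e - -fderiv ℝ u p e) / 2 = fderiv ℝ u p e := by ring
  rw [← hlim]
  refine (hslope.div_const 2).congr fun s => ?_
  simp only [slope_def_field, symmQuot, Pi.sub_apply, zero_smul, add_zero, sub_zero, sub_self]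
  rw [div_div, mul_comm]

lemma abs_symmQuot_sub_symmQuot_half_le (hα : 0 < α) (hM : 0 ≤ M)
    (hZ : ⨆ x0 : E, zygmundSemi α (ball x0 t) u ≤ ENNReal.ofReal M) (ht : 0 < t) (p : E)
    {e : E} (he : ‖e‖ ≤ 1) :
    |symmQuot u p e t - symmQuot u p e (t / 2)| ≤ t ^ (α - 1) * M := by
  set v : E := (t / 2) • e
  have hvt : ‖v‖ < t := by
    rw [norm_smul, Real.norm_of_nonneg (by positivity)]
    nlinarith [norm_nonneg e]
  have hsplit : symmQuot u p e t - symmQuot u p e (t / 2) =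
      ((u (p + v + v) + u (p + v - v) - 2 * u (p + v))
        - (u (p - v + v) + u (p - v - v) - 2 * u (p - v))) / (2 * t) := by
    have h1 : p + v + v = p + t • e := by simp only [v]; module
    have h2 : p - v - v = p - t • e := by simp only [v]; module
    rw [h1, h2, add_sub_cancel_right, sub_add_cancel, symmQuot, symmQuot]
    field_simp
    ring
  have hstep : ∀ y, |u (y + v) + u (y - v) - 2 * u y| ≤ t ^ α * M := fun y =>
    (abs_secondDiff_le_of_norm_lt hα hM hZ y hvt).trans <| by gcongr
  rw [hsplit, abs_div, abs_of_pos (mul_pos two_pos ht), Real.rpow_sub_one ht.ne']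
  calc _ ≤ (t ^ α * M + t ^ α * M) / (2 * t) := by
        gcongr
        exact (abs_sub _ _).trans (add_le_add (hstep _) (hstep _))
    _ = t ^ α / t * M := by field_simp; ring

lemma abs_symmQuot_sub_symmQuot_le (hα : 0 < α) (hM : 0 ≤ M)
    (hZ : ⨆ x0 : E, zygmundSemi α (ball x0 t) u ≤ ENNReal.ofReal M) {x x' e : E}
    (hxx : ‖x - x'‖ < t) (he : ‖e‖ ≤ 1) :
    |symmQuot u x e t - symmQuot u x' e t| ≤ 4 * t ^ (α - 1) * M := by
  have ht : 0 < t := (norm_nonneg _).trans_lt hxx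
  set c : E := (2⁻¹ : ℝ) • (x + x')
  set h₁ : E := (2⁻¹ : ℝ) • (x - x') + t • e
  set h₂ : E := (2⁻¹ : ℝ) • (x - x') - t • e
  have hsplit : symmQuot u x e t - symmQuot u x' e t =
      ((u (c + h₁) + u (c - h₁) - 2 * u c)
        - (u (c + h₂) + u (c - h₂) - 2 * u c)) / (2 * t) := by
    have a1 : c + h₁ = x + t • e := by simp only [c, h₁]; module
    have a2 : c - h₁ = x' - t • e := by simp only [c, h₁]; module
    have a3 : c + h₂ = x - t • e := by simp only [c, h₂]; module
    have a4 : c - h₂ = x' + t • e := by simp only [c, h₂]; module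
    rw [a1, a2, a3, a4, symmQuot, symmQuot]
    ring
  have hhalf : ‖(2⁻¹ : ℝ) • (x - x')‖ < t / 2 := by
    rw [norm_smul, Real.norm_of_nonneg (by norm_num)]
    linarith
  have hte : ‖t • e‖ ≤ t := by
    rw [norm_smul, Real.norm_of_nonneg ht.le]
    nlinarith
  have hb₁ : ‖h₁‖ < 2 * t := (norm_add_le _ _).trans_lt (by linarith)
  have hb₂ : ‖h₂‖ < 2 * t := (norm_sub_le _ _).trans_lt (by linarith)
  rw [hsplit, abs_div, abs_of_pos (mul_pos two_pos ht), Real.rpow_sub_one ht.ne']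
  calc _ ≤ (4 * t ^ α * M + 4 * t ^ α * M) / (2 * t) := by
        gcongr
        exact (abs_sub _ _).trans (add_le_add
          (abs_secondDiff_le_of_norm_lt_two_mul hα hM hZ c hb₁)
          (abs_secondDiff_le_of_norm_lt_two_mul hα hM hZ c hb₂))
    _ = 4 * (t ^ α / t) * M := by field_simp; ring

lemma abs_fderiv_sub_symmQuot_le {p : E} (hu : DifferentiableAt ℝ u p) (hα : 0 < α) (ht : 0 < t)
    {e : E} (he : ‖e‖ ≤ 1) {M : ℕ → ℝ} (hM : ∀ n, 0 ≤ M n)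
    (hZ : ∀ n, ⨆ x0 : E, zygmundSemi α (ball x0 (t / 2 ^ n)) u ≤ ENNReal.ofReal (M n))
    (hsum : Summable fun n => (t / 2 ^ n) ^ (α - 1) * M n) :
    |fderiv ℝ u p e - symmQuot u p e t| ≤ ∑' n, (t / 2 ^ n) ^ (α - 1) * M n := by
  have hstep (n : ℕ) : dist (symmQuot u p e (t / 2 ^ n)) (symmQuot u p e (t / 2 ^ (n + 1)))
      ≤ (t / 2 ^ n) ^ (α - 1) * M n := by
    rw [pow_succ, ← div_div]
    exact abs_symmQuot_sub_symmQuot_half_le hα (hM n) (hZ n) (by positivity) p he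
  have hscales : Tendsto (fun n : ℕ => t / 2 ^ n) atTop (𝓝[≠] 0) := by
    refine tendsto_nhdsWithin_of_tendsto_nhds_of_eventually_within _ ?_
      (Eventually.of_forall fun n => (div_pos ht (by positivity)).ne')
    simpa [div_eq_mul_inv] using (tendsto_pow_atTop_nhds_zero_of_lt_one (r := 2⁻¹) (by norm_num)
      (by norm_num)).const_mul t
  have := dist_le_tsum_of_dist_le_of_tendsto₀ _ hstep hsum
    ((tendsto_symmQuot hu e).comp hscales)
  rwa [pow_zero, div_one, dist_comm] at this

end SymmetricQuotient

lemma ENNReal.ofReal_le_mul_tsum_of_forall_summable {X C : ℝ} (hC : 0 < C) {c : ℕ → ℝ}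
    (hc : ∀ n, 0 < c n) {Z : ℕ → ℝ≥0∞}
    (h : ∀ M : ℕ → ℝ, (∀ n, 0 ≤ M n) → (∀ n, Z n ≤ ENNReal.ofReal (M n)) →
      Summable (fun n => c n * M n) → X ≤ C * ∑' n, c n * M n) :
    ENNReal.ofReal X ≤ ENNReal.ofReal C * ∑' n, ENNReal.ofReal (c n) * Z n := by
  rcases eq_or_ne (∑' n, ENNReal.ofReal (c n) * Z n) ⊤ with hS | hS
  · simp [hS, hC]
  have hZ (n : ℕ) : Z n ≠ ⊤ :=
    (ENNReal.lt_top_of_mul_ne_top_right (ne_top_of_le_ne_top hS (ENNReal.le_tsum n))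
      (ENNReal.ofReal_pos.mpr (hc n)).ne').ne
  have hterm (n : ℕ) : ENNReal.ofReal (c n) * Z n = ENNReal.ofReal (c n * (Z n).toReal) := by
    rw [ENNReal.ofReal_mul (hc n).le, ENNReal.ofReal_toReal (hZ n)]
  have hsum : Summable fun n => c n * (Z n).toReal := by
    simpa [ENNReal.toReal_mul, ENNReal.toReal_ofReal (hc _).le] using ENNReal.summable_toReal hS
  rw [tsum_congr hterm, ← ENNReal.ofReal_tsum_of_nonneg (fun n => by positivity [hc n]) hsum,
    ← ENNReal.ofReal_mul hC.le]
  exact ENNReal.ofReal_le_ofReal <| h _ (fun _ => ENNReal.toReal_nonneg)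
    (fun n => (ENNReal.ofReal_toReal (hZ n)).ge) hsum

lemma uniformContinuous_of_edist_le {X Y : Type*} [PseudoMetricSpace X] [PseudoEMetricSpace Y]
    {f : X → Y} {δ : ℕ → ℝ} (hδ : ∀ i, 0 < δ i) {b : ℕ → ℝ≥0∞}
    (hb : Tendsto b atTop (𝓝 0)) (h : ∀ i x y, dist x y < δ i → edist (f x) (f y) ≤ b i) :
    UniformContinuous f := by
  refine (Metric.uniformity_basis_dist.uniformContinuous_iff
    uniformity_basis_edist).mpr fun ε hε => ?_
  obtain ⟨i, hi⟩ := (hb.eventually (gt_mem_nhds hε)).exists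
  exact ⟨δ i, hδ i, fun x y hxy => (h i x y hxy).trans_lt hi⟩

section Gradient

variable {F : Type*} [NormedAddCommGroup F] [InnerProductSpace ℝ F] [CompleteSpace F] {α t : ℝ}
  {u : F → ℝ}

lemma norm_gradient_sub_le (hu : Differentiable ℝ u) (hα : 0 < α) {x x' : F}
    (hxx : ‖x - x'‖ < t) {M : ℕ → ℝ} (hM : ∀ n, 0 ≤ M n)
    (hZ : ∀ n, ⨆ x0 : F, zygmundSemi α (ball x0 (t / 2 ^ n)) u ≤ ENNReal.ofReal (M n))
    (hsum : Summable fun n => (t / 2 ^ n) ^ (α - 1) * M n) :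
    ‖gradient u x - gradient u x'‖ ≤ 6 * ∑' n, (t / 2 ^ n) ^ (α - 1) * M n := by
  have ht : 0 < t := (norm_nonneg _).trans_lt hxx
  set S := ∑' n, (t / 2 ^ n) ^ (α - 1) * M n
  set g := gradient u x - gradient u x'
  set e : F := ‖g‖⁻¹ • g
  have he : ‖e‖ ≤ 1 := by
    rw [norm_smul, norm_inv, norm_norm]
    exact inv_mul_le_one
  have hge : ‖g‖ = fderiv ℝ u x e - fderiv ℝ u x' e := by
    rw [← inner_gradient_left, ← inner_gradient_left, ← inner_sub_left]
    change ‖g‖ = ⟪g, ‖g‖⁻¹ • g⟫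
    rw [real_inner_smul_right, real_inner_self_eq_norm_mul_norm, ← mul_assoc, inv_mul_mul_self]
  have hfirst : t ^ (α - 1) * M 0 ≤ S := by
    simpa using hsum.le_tsum 0 fun n _ => mul_nonneg (by positivity) (hM n)
  have hx := (abs_le.mp (abs_fderiv_sub_symmQuot_le (hu x) hα ht he hM hZ hsum)).2
  have hx' := (abs_le.mp (abs_fderiv_sub_symmQuot_le (hu x') hα ht he hM hZ hsum)).1
  have hmid := (abs_le.mp
    (abs_symmQuot_sub_symmQuot_le hα (hM 0) (by simpa using hZ 0) hxx he)).2
  rw [hge]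
  linarith

lemma ofReal_norm_gradient_sub_le (hu : Differentiable ℝ u) (hα : 0 < α) {x x' : F}
    (hxx : ‖x - x'‖ < t) :
    ENNReal.ofReal ‖gradient u x - gradient u x'‖ ≤ ENNReal.ofReal 6 *
      ∑' n : ℕ, ENNReal.ofReal ((t / 2 ^ n) ^ (α - 1)) *
        ⨆ x0 : F, zygmundSemi α (ball x0 (t / 2 ^ n)) u := by
  have ht : 0 < t := (norm_nonneg _).trans_lt hxx
  exact ENNReal.ofReal_le_mul_tsum_of_forall_summable (by norm_num) (fun n => by positivity)
    fun M hM hZ hsum => norm_gradient_sub_le hu hα hxx hM hZ hsum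

lemma ofReal_norm_gradient_sub_le_dyadic (hu : Differentiable ℝ u) (hα : 0 < α) (a : ℝ)
    {x x' : F} (hxx : ‖x - x'‖ < (2 : ℝ) ^ (-a)) :
    ENNReal.ofReal ‖gradient u x - gradient u x'‖ ≤ ENNReal.ofReal 6 *
      ∑' n : ℕ, ENNReal.ofReal ((2 : ℝ) ^ (((n : ℝ) + a) * (1 - α))) *
        ⨆ x0 : F, zygmundSemi α (ball x0 ((2 : ℝ) ^ (-((n : ℝ) + a)))) u := by
  have hscale (n : ℕ) : (2 : ℝ) ^ (-a) / 2 ^ n = 2 ^ (-((n : ℝ) + a)) := by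
    rw [neg_add, Real.rpow_add two_pos, Real.rpow_neg two_pos.le (n : ℝ), Real.rpow_natCast,
      div_eq_mul_inv, mul_comm]
  have hcoef (n : ℕ) :
      ((2 : ℝ) ^ (-((n : ℝ) + a))) ^ (α - 1) = 2 ^ (((n : ℝ) + a) * (1 - α)) := by
    rw [← Real.rpow_mul two_pos.le]
    ring_nf
  simpa only [hscale, hcoef] using ofReal_norm_gradient_sub_le hu hα hxx

end Gradient

theorem gradient_modulus_zygmund_series_general
    (d : ℕ) (α : ℝ) (hα : 0 < α) :
    ∃ C : ℝ, 0 < C ∧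
      ∀ u : EuclideanSpace ℝ (Fin d) → ℝ, Differentiable ℝ u →
        (∀ i : ℕ, 1 ≤ i → ∀ x x' : EuclideanSpace ℝ (Fin d),
          (2:ℝ) ^ (-(i:ℝ) - 1) ≤ ‖x - x'‖ → ‖x - x'‖ < (2:ℝ) ^ (-(i:ℝ)) →
          ENNReal.ofReal ‖gradient u x - gradient u x'‖ ≤
            ENNReal.ofReal C *
              ∑' k : ℕ, ENNReal.ofReal ((2:ℝ) ^ (((k:ℝ) + (i:ℝ)) * (1 - α))) *
                ⨆ x0 : EuclideanSpace ℝ (Fin d),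
                  zygmundSemi α (ball x0 ((2:ℝ) ^ (-((k:ℝ) + (i:ℝ))))) u) ∧
          ((∑' k : ℕ, ENNReal.ofReal ((2:ℝ) ^ ((k:ℝ) * (1 - α))) *
              ⨆ x0 : EuclideanSpace ℝ (Fin d),
                zygmundSemi α (ball x0 ((2:ℝ) ^ (-(k:ℝ)))) u) < ⊤ →
            UniformContinuous (gradient u)) := by
  refine ⟨6, by norm_num, fun u hu => ⟨fun i _ x x' _ hxx =>
    ofReal_norm_gradient_sub_le_dyadic hu hα i hxx, fun hfin => ?_⟩⟩
  have htail := ENNReal.Tendsto.const_mul (ENNReal.tendsto_sum_nat_add _ hfin.ne)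
    (Or.inr (ENNReal.ofReal_ne_top (r := 6)))
  rw [mul_zero] at htail
  have hδ (i : ℕ) : 0 < (2 : ℝ) ^ (-(i : ℝ)) := by positivity
  refine uniformContinuous_of_edist_le hδ htail fun i x y hxy => ?_
  rw [edist_dist, dist_eq_norm]
  simpa only [Nat.cast_add] using
    ofReal_norm_gradient_sub_le_dyadic hu hα i (by rwa [← dist_eq_norm])

/-- Modulus of continuity of the gradient in terms of the tail of a series of Zygmund
seminorms, and the resulting uniform continuity. -/
theorem gradient_modulus_zygmund_series
    (d : ℕ) (hd : 1 ≤ d) (α : ℝ) (hα : 0 < α) (hα1 : α < 1) :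
    ∃ C : ℝ, 0 < C ∧
      ∀ u : EuclideanSpace ℝ (Fin d) → ℝ, Differentiable ℝ u →
        (∀ i : ℕ, 1 ≤ i → ∀ x x' : EuclideanSpace ℝ (Fin d),
          (2:ℝ) ^ (-(i:ℝ) - 1) ≤ ‖x - x'‖ → ‖x - x'‖ < (2:ℝ) ^ (-(i:ℝ)) →
          ENNReal.ofReal ‖gradient u x - gradient u x'‖ ≤
            ENNReal.ofReal C *
              ∑' k : ℕ, ENNReal.ofReal ((2:ℝ) ^ (((k:ℝ) + (i:ℝ)) * (1 - α))) *
                ⨆ x0 : EuclideanSpace ℝ (Fin d),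
                  zygmundSemi α (ball x0 ((2:ℝ) ^ (-((k:ℝ) + (i:ℝ))))) u) ∧
          ((∑' k : ℕ, ENNReal.ofReal ((2:ℝ) ^ ((k:ℝ) * (1 - α))) *
              ⨆ x0 : EuclideanSpace ℝ (Fin d),
                zygmundSemi α (ball x0 ((2:ℝ) ^ (-(k:ℝ)))) u) < ⊤ →
            UniformContinuous (gradient u)) :=
  gradient_modulus_zygmund_series_general d α hα
end
end

section
/- Let α ∈ (0,1) and σ ∈ (1,2). There exists a constant C > 0 depending only on d, α, σ such that for every continuously differentiable u : ℝ^d → ℝ, Σ_{k=0}^∞ 2^{k(σ−α)} sup_{x_0∈ℝ^d} [u − P_{x_0}u]_{α;B_{2^{−k}}(x_0)} ≤ C Σ_{k=0}^∞ 2^{k(σ−α)} sup_{x_0∈ℝ^d} inf_{p∈𝒫_1} [u − p]_{α;B_{2^{−k}}(x_0)}, the inequality being understood in [0,∞]. -/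
/-!
Fix `x₀` and a dyadic radius `2^{-k}`, and let `b m` be slopes of (nearly) best affine
approximations of `u` on the balls `B_{2^{-(k+m)}}(x₀)`. On a ball of radius `r` the Hölder
seminorm of `x ↦ ⟪b, x⟫` lies between `‖b‖ r^{1-α}` and `‖b‖ (2r)^{1-α}`, so two slopes that
are good on the same ball differ by at most `r^{α-1}` times the sum of their defects. As `u` is
`C¹`, `b m → ∇u(x₀)`, and telescoping bounds `[u - P_{x₀}u]_{α;B_{2^{-k}}(x₀)}` by
`Σ_m 2^{m(1-α)}` times the best affine defects at scales `2^{-(k+m)}`. Summing over `k` with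
weights `2^{k(σ-α)}` and exchanging the sums leaves the factor `Σ_m 2^{m(1-σ)}`, finite as `σ > 1`.
-/


open MeasureTheory Metric Filter Set
open scoped ENNReal Topology

noncomputable section

open scoped NNReal RealInnerProductSpace

section HolderSemi

variable {E F : Type*} [NormedAddCommGroup E] [NormedAddCommGroup F] {γ : ℝ} {Ω Ω' : Set E}

theorem holderSemi_le_iff {f : E → F} {c : ℝ≥0∞} :
    holderSemi γ Ω f ≤ c ↔
      ∀ x ∈ Ω, ∀ y ∈ Ω, x ≠ y → ENNReal.ofReal (‖f x - f y‖ / ‖x - y‖ ^ γ) ≤ c := by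
  simp only [holderSemi, iSup_le_iff]

theorem le_holderSemi_s12 {f : E → F} {x y : E} (hx : x ∈ Ω) (hy : y ∈ Ω) (hxy : x ≠ y) :
    ENNReal.ofReal (‖f x - f y‖ / ‖x - y‖ ^ γ) ≤ holderSemi γ Ω f :=
  le_iSup₂_of_le x hx <| le_iSup₂_of_le y hy <| le_iSup_of_le hxy le_rfl

theorem holderSemi_mono (h : Ω ⊆ Ω') (f : E → F) : holderSemi γ Ω f ≤ holderSemi γ Ω' f :=
  holderSemi_le_iff.2 fun _ hx _ hy hxy => le_holderSemi_s12 (h hx) (h hy) hxy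

theorem holderSemi_sub_le (f g : E → F) :
    holderSemi γ Ω (fun x => f x - g x) ≤ holderSemi γ Ω f + holderSemi γ Ω g := by
  refine holderSemi_le_iff.2 fun x hx y hy hxy => ?_
  calc ENNReal.ofReal (‖f x - g x - (f y - g y)‖ / ‖x - y‖ ^ γ)
      ≤ ENNReal.ofReal (‖f x - f y‖ / ‖x - y‖ ^ γ + ‖g x - g y‖ / ‖x - y‖ ^ γ) := by
        rw [← add_div, sub_sub_sub_comm]
        gcongr
        exact norm_sub_le _ _
    _ ≤ _ := ENNReal.ofReal_add_le
    _ ≤ _ := add_le_add (le_holderSemi_s12 hx hy hxy) (le_holderSemi_s12 hx hy hxy)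

theorem holderSemi_sub_const_add (f g : E → ℝ) (a : ℝ) :
    holderSemi γ Ω (fun x => f x - (a + g x)) = holderSemi γ Ω (fun x => f x - g x) := by
  have h : ∀ x y, f x - (a + g x) - (f y - (a + g y)) = f x - g x - (f y - g y) := by
    intros; ring
  simp only [holderSemi, h]

theorem LipschitzOnWith.holderSemi_ball_le {f : E → F} {K : ℝ≥0} {x₀ : E} {r : ℝ}
    (hf : LipschitzOnWith K f (ball x₀ r)) (hγ : γ ≤ 1) :
    holderSemi γ (ball x₀ r) f ≤ K * ENNReal.ofReal ((2 * r) ^ (1 - γ)) := by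
  refine holderSemi_le_iff.2 fun x hx y hy hxy => ?_
  have hpos : 0 < ‖x - y‖ := norm_pos_iff.2 (sub_ne_zero.2 hxy)
  have hlt : ‖x - y‖ < 2 * r := by
    rw [← dist_eq_norm]
    linarith [dist_triangle_right x y x₀, mem_ball.1 hx, mem_ball.1 hy]
  have hlip : ‖f x - f y‖ ≤ K * ‖x - y‖ := by
    simpa only [dist_eq_norm] using hf.dist_le_mul x hx y hy
  rw [← ENNReal.ofReal_coe_nnreal, ← ENNReal.ofReal_mul K.coe_nonneg]
  refine ENNReal.ofReal_le_ofReal ((div_le_iff₀ (by positivity)).2 ?_)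
  calc ‖f x - f y‖ ≤ K * (‖x - y‖ ^ (1 - γ) * ‖x - y‖ ^ γ) := by
        rwa [← Real.rpow_add hpos, sub_add_cancel, Real.rpow_one]
    _ ≤ K * ((2 * r) ^ (1 - γ) * ‖x - y‖ ^ γ) := by gcongr
    _ = _ := by ring

end HolderSemi

section InnerProduct

variable {F : Type*} [NormedAddCommGroup F] [InnerProductSpace ℝ F] {α r : ℝ} {x₀ : F}

theorem holderSemi_ball_inner_le (hα : α ≤ 1) (b : F) :
    holderSemi α (ball x₀ r) (fun x => ⟪b, x⟫) ≤ ‖b‖ₑ * ENNReal.ofReal ((2 * r) ^ (1 - α)) := by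
  have hb : LipschitzWith ‖b‖₊ (fun x => ⟪b, x⟫) := by
    have h := (innerSL ℝ b).lipschitz
    rw [show ‖innerSL ℝ b‖₊ = ‖b‖₊ from NNReal.eq (innerSL_apply_norm ℝ b)] at h
    exact h
  rw [enorm_eq_nnnorm]
  exact hb.lipschitzOnWith.holderSemi_ball_le hα

theorem enorm_le_rpow_mul_holderSemi_ball_inner (hr : 0 < r) (b : F) :
    ‖b‖ₑ ≤ ENNReal.ofReal (r ^ (α - 1)) * holderSemi α (ball x₀ r) (fun x => ⟪b, x⟫) := by
  rcases eq_or_ne b 0 with rfl | hb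
  · simp
  have hb' : 0 < ‖b‖ := norm_pos_iff.2 hb
  set v : F := (r / 2 / ‖b‖) • b
  have hv : ‖v‖ = r / 2 := by
    rw [norm_smul, Real.norm_of_nonneg (by positivity), div_mul_cancel₀ _ hb'.ne']
  have hmem : ∀ w : F, ‖w‖ = r / 2 → x₀ + w ∈ ball x₀ r := fun w hw => by
    rw [mem_ball, dist_self_add_left, hw]; linarith
  have hx : x₀ + v ∈ ball x₀ r := hmem v hv
  have hy : x₀ + -v ∈ ball x₀ r := hmem (-v) (by rw [norm_neg, hv])
  have hdiff : x₀ + v - (x₀ + -v) = (r / ‖b‖) • b := by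
    rw [add_sub_add_left_eq_sub, sub_neg_eq_add, ← two_smul ℝ v, smul_smul]
    congr 1; ring
  have hnorm : ‖x₀ + v - (x₀ + -v)‖ = r := by
    rw [hdiff, norm_smul, Real.norm_of_nonneg (by positivity), div_mul_cancel₀ _ hb'.ne']
  have hne : x₀ + v ≠ x₀ + -v := fun h => by
    rw [h, sub_self, norm_zero] at hnorm; exact hr.ne hnorm
  have hinner : ‖⟪b, x₀ + v⟫ - ⟪b, x₀ + -v⟫‖ = r * ‖b‖ := by
    rw [← inner_sub_right, hdiff, real_inner_smul_right, real_inner_self_eq_norm_sq,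
      Real.norm_of_nonneg (by positivity)]
    field_simp
  calc ‖b‖ₑ = ENNReal.ofReal (r ^ (α - 1) * (r * ‖b‖ / r ^ α)) := by
        rw [Real.rpow_sub_one hr.ne', ← ofReal_norm]
        congr 1
        field_simp
    _ ≤ _ := by
        rw [ENNReal.ofReal_mul (by positivity)]
        gcongr
        simpa only [hinner, hnorm] using le_holderSemi_s12 (f := fun x => ⟪b, x⟫) hx hy hne

theorem edist_le_rpow_mul_holderSemi_ball_sub_inner (hr : 0 < r) (u : F → ℝ) (b b' : F) :
    edist b b' ≤ ENNReal.ofReal (r ^ (α - 1)) *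
      (holderSemi α (ball x₀ r) (fun x => u x - ⟪b, x⟫) +
        holderSemi α (ball x₀ r) (fun x => u x - ⟪b', x⟫)) := by
  rw [edist_eq_enorm_sub]
  refine (enorm_le_rpow_mul_holderSemi_ball_inner (x₀ := x₀) hr _).trans (mul_le_mul_right ?_ _)
  calc holderSemi α (ball x₀ r) (fun x => ⟪b - b', x⟫)
      = holderSemi α (ball x₀ r) (fun x => (u x - ⟪b', x⟫) - (u x - ⟪b, x⟫)) := by
        simp only [inner_sub_left, sub_sub_sub_cancel_left]
    _ ≤ _ := (holderSemi_sub_le _ _).trans_eq (add_comm _ _)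

theorem holderSemi_sub_inner_sub {Ω : Set F} (u : F → ℝ) (b x₁ : F) :
    holderSemi α Ω (fun x => u x - ⟪b, x - x₁⟫) = holderSemi α Ω (fun x => u x - ⟪b, x⟫) := by
  simp only [inner_sub_right, sub_eq_add_neg (⟪b, _⟫), add_comm (⟪b, _⟫)]
  exact holderSemi_sub_const_add _ _ _

end InnerProduct

theorem rpow_sub_one_mul_two_mul_rpow_one_sub {α r : ℝ} (hr : 0 < r) :
    r ^ (α - 1) * (2 * r) ^ (1 - α) = 2 ^ (1 - α) := by
  rw [Real.mul_rpow zero_le_two hr.le, mul_left_comm, ← Real.rpow_add hr]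
  simp

section Gradient

variable {F : Type*} [NormedAddCommGroup F] [InnerProductSpace ℝ F] [CompleteSpace F] {α : ℝ}
  {u : F → ℝ}

theorem tendsto_rpow_mul_holderSemi_ball_sub_gradient (hu : ContDiff ℝ 1 u) (hα : α ≤ 1)
    (x₀ : F) :
    Tendsto (fun r => ENNReal.ofReal (r ^ (α - 1)) *
      holderSemi α (ball x₀ r) (fun x => u x - ⟪gradient u x₀, x⟫)) (𝓝[>] 0) (𝓝 0) := by
  rw [ENNReal.tendsto_nhds_zero]
  intro ε hε
  obtain ⟨K, hK, hKε⟩ := ENNReal.exists_nnreal_pos_mul_lt ENNReal.ofReal_ne_top hε.ne'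
  obtain ⟨ρ, hρ, hρK⟩ := Metric.eventually_nhds_iff_ball.1 <|
    (hu.continuous_fderiv one_ne_zero).continuousAt.eventually
      (closedBall_mem_nhds (fderiv ℝ u x₀) hK)
  filter_upwards [Ioo_mem_nhdsGT hρ] with r ⟨hr, hrρ⟩
  have hlip : LipschitzOnWith K (fun x => u x - ⟪gradient u x₀, x⟫) (ball x₀ r) := by
    simp only [gradient, InnerProductSpace.toDual_symm_apply]
    refine (convex_ball x₀ r).lipschitzOnWith_of_nnnorm_hasFDerivWithin_le
      (f' := fun x => fderiv ℝ u x - fderiv ℝ u x₀) (fun x _ => ?_) (fun x hx => ?_)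
    · exact (((hu.differentiable one_ne_zero) x).hasFDerivAt.sub
        (fderiv ℝ u x₀).hasFDerivAt).hasFDerivWithinAt
    · rw [← NNReal.coe_le_coe, coe_nnnorm, ← dist_eq_norm]
      exact hρK x (ball_subset_ball hrρ.le hx)
  calc ENNReal.ofReal (r ^ (α - 1)) * holderSemi α (ball x₀ r) _
      ≤ ENNReal.ofReal (r ^ (α - 1)) * (K * ENNReal.ofReal ((2 * r) ^ (1 - α))) :=
        mul_le_mul_right (hlip.holderSemi_ball_le hα) _
    _ = K * ENNReal.ofReal (2 ^ (1 - α)) := by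
        rw [mul_left_comm, ← ENNReal.ofReal_mul (by positivity),
          rpow_sub_one_mul_two_mul_rpow_one_sub hr]
    _ ≤ ε := hKε.le

end Gradient

section Dyadic

theorem ofReal_two_rpow_neg_rpow (α : ℝ) (j : ℕ) :
    ENNReal.ofReal (((2 : ℝ) ^ (-(j : ℝ))) ^ (α - 1)) = ENNReal.ofReal (2 ^ (1 - α)) ^ j := by
  rw [← ENNReal.ofReal_pow (by positivity), ← Real.rpow_mul zero_le_two,
    ← Real.rpow_mul_natCast zero_le_two]
  congr 2
  ring

theorem ofReal_two_rpow_pow_mul_ofReal_two_mul_two_rpow_neg (α : ℝ) (k : ℕ) :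
    ENNReal.ofReal (2 ^ (1 - α)) ^ k * ENNReal.ofReal ((2 * 2 ^ (-(k : ℝ))) ^ (1 - α)) =
      ENNReal.ofReal (2 ^ (1 - α)) := by
  rw [← ofReal_two_rpow_neg_rpow, ← ENNReal.ofReal_mul (by positivity),
    rpow_sub_one_mul_two_mul_rpow_one_sub (by positivity)]

theorem tendsto_two_rpow_neg_nhdsGT : Tendsto (fun j : ℕ => (2 : ℝ) ^ (-(j : ℝ))) atTop (𝓝[>] 0) := by
  refine tendsto_nhdsWithin_iff.2 ⟨?_, Eventually.of_forall fun j => mem_Ioi.2 (by positivity)⟩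
  simp_rw [Real.rpow_neg zero_le_two, Real.rpow_natCast, ← inv_pow]
  exact tendsto_pow_atTop_nhds_zero_of_lt_one (by norm_num) (by norm_num)

variable {F : Type*} [NormedAddCommGroup F] [InnerProductSpace ℝ F] {α : ℝ}

theorem edist_le_pow_mul_holderSemi_dyadic_ball_sub_inner (u : F → ℝ) (x₀ : F) (j : ℕ)
    (c c' : F) :
    edist c c' ≤ ENNReal.ofReal (2 ^ (1 - α)) ^ j *
      (holderSemi α (ball x₀ (2 ^ (-(j : ℝ)))) (fun x => u x - ⟪c, x⟫) +
        holderSemi α (ball x₀ (2 ^ (-(j : ℝ)))) (fun x => u x - ⟪c', x⟫)) := by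
  rw [← ofReal_two_rpow_neg_rpow]
  exact edist_le_rpow_mul_holderSemi_ball_sub_inner (by positivity) u c c'

theorem edist_le_pow_mul_tsum_of_tendsto (hα : α ≤ 1) (u : F → ℝ) (x₀ : F) (k : ℕ)
    {b : ℕ → F} {g : F} (hb : Tendsto b atTop (𝓝 g)) :
    edist (b 0) g ≤ ENNReal.ofReal (2 ^ (1 - α)) ^ (k + 1) *
      (2 * ∑' m, ENNReal.ofReal (2 ^ (1 - α)) ^ m *
        holderSemi α (ball x₀ (2 ^ (-((k + m : ℕ) : ℝ)))) (fun x => u x - ⟪b m, x⟫)) := by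
  set θ := ENNReal.ofReal (2 ^ (1 - α))
  set E : ℕ → F → ℝ≥0∞ := fun j c => holderSemi α (ball x₀ (2 ^ (-(j : ℝ)))) (fun x => u x - ⟪c, x⟫)
  set e : ℕ → ℝ≥0∞ := fun m => E (k + m) (b m)
  set S := ∑' m, θ ^ m * e m
  have hθ : 1 ≤ θ := ENNReal.one_le_ofReal.2 (Real.one_le_rpow one_le_two (by linarith))
  have hstep : ∀ m, edist (b m) (b (m + 1)) ≤ θ ^ (k + 1) * (θ ^ m * e m + θ ^ m * e (m + 1)) :=
    fun m => calc
      edist (b m) (b (m + 1)) ≤ θ ^ (k + (m + 1)) * (E (k + (m + 1)) (b m) + e (m + 1)) :=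
        edist_le_pow_mul_holderSemi_dyadic_ball_sub_inner u x₀ _ _ _
      _ ≤ θ ^ (k + (m + 1)) * (e m + e (m + 1)) := by
        gcongr
        refine holderSemi_mono (ball_subset_ball ?_) _
        exact Real.rpow_le_rpow_of_exponent_le one_le_two (by push_cast; linarith)
      _ = _ := by ring
  have hshift : ∑' m, θ ^ m * e (m + 1) ≤ S := calc
    ∑' m, θ ^ m * e (m + 1) ≤ ∑' m, θ ^ (m + 1) * e (m + 1) :=
      ENNReal.tsum_le_tsum fun m => by gcongr; exact m.le_succ
    _ ≤ S := ENNReal.tsum_comp_le_tsum_of_injective (add_left_injective 1) fun m => θ ^ m * e m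
  calc edist (b 0) g ≤ ∑' m, θ ^ (k + 1) * (θ ^ m * e m + θ ^ m * e (m + 1)) :=
        edist_le_tsum_of_edist_le_of_tendsto₀ _ hstep hb
    _ = θ ^ (k + 1) * (S + ∑' m, θ ^ m * e (m + 1)) := by
        rw [ENNReal.tsum_mul_left, ENNReal.tsum_add]
    _ ≤ θ ^ (k + 1) * (2 * S) := by rw [two_mul]; gcongr

variable [CompleteSpace F] {u : F → ℝ}

theorem tendsto_pow_mul_holderSemi_dyadic_ball_sub_gradient (hu : ContDiff ℝ 1 u) (hα : α ≤ 1)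
    (x₀ : F) :
    Tendsto (fun j : ℕ => ENNReal.ofReal (2 ^ (1 - α)) ^ j *
      holderSemi α (ball x₀ (2 ^ (-(j : ℝ)))) (fun x => u x - ⟪gradient u x₀, x⟫)) atTop (𝓝 0) := by
  simpa only [Function.comp_def, ofReal_two_rpow_neg_rpow] using
    (tendsto_rpow_mul_holderSemi_ball_sub_gradient hu hα x₀).comp tendsto_two_rpow_neg_nhdsGT

theorem tendsto_gradient_of_tsum_pow_mul_holderSemi_dyadic_ne_top (hu : ContDiff ℝ 1 u)
    (hα : α ≤ 1) (x₀ : F) (k : ℕ) {b : ℕ → F}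
    (hS : ∑' m, ENNReal.ofReal (2 ^ (1 - α)) ^ m *
      holderSemi α (ball x₀ (2 ^ (-((k + m : ℕ) : ℝ)))) (fun x => u x - ⟪b m, x⟫) ≠ ⊤) :
    Tendsto b atTop (𝓝 (gradient u x₀)) := by
  set θ := ENNReal.ofReal (2 ^ (1 - α))
  set E : ℕ → F → ℝ≥0∞ := fun j c => holderSemi α (ball x₀ (2 ^ (-(j : ℝ)))) (fun x => u x - ⟪c, x⟫)
  rw [tendsto_iff_edist_tendsto_0]
  have h0 : Tendsto (fun m => θ ^ k * (θ ^ m * E (k + m) (b m)) +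
      θ ^ (k + m) * E (k + m) (gradient u x₀)) atTop (𝓝 0) := by
    have h := (ENNReal.Tendsto.const_mul (a := θ ^ k)
      (ENNReal.tendsto_atTop_zero_of_tsum_ne_top hS) (Or.inr (by simp [θ]))).add
      ((tendsto_pow_mul_holderSemi_dyadic_ball_sub_gradient hu hα x₀).comp
        ((tendsto_add_atTop_nat k).congr fun m => Nat.add_comm m k))
    rwa [mul_zero, add_zero] at h
  refine tendsto_of_tendsto_of_tendsto_of_le_of_le tendsto_const_nhds h0 (fun _ => bot_le)
    fun m => (edist_le_pow_mul_holderSemi_dyadic_ball_sub_inner (α := α) u x₀ (k + m) _ _).trans_eq ?_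
  ring

theorem holderSemi_dyadic_ball_sub_gradient_le_tsum (hu : ContDiff ℝ 1 u) (hα : α ≤ 1) (x₀ : F)
    (k : ℕ) (b : ℕ → F) :
    holderSemi α (ball x₀ (2 ^ (-(k : ℝ)))) (fun x => u x - ⟪gradient u x₀, x⟫) ≤
      (1 + 2 * ENNReal.ofReal (2 ^ (1 - α)) ^ 2) * ∑' m, ENNReal.ofReal (2 ^ (1 - α)) ^ m *
        holderSemi α (ball x₀ (2 ^ (-((k + m : ℕ) : ℝ)))) (fun x => u x - ⟪b m, x⟫) := by
  set θ := ENNReal.ofReal (2 ^ (1 - α))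
  set g := gradient u x₀
  set S := ∑' m, θ ^ m *
    holderSemi α (ball x₀ (2 ^ (-((k + m : ℕ) : ℝ)))) (fun x => u x - ⟪b m, x⟫)
  set c := ENNReal.ofReal ((2 * 2 ^ (-(k : ℝ))) ^ (1 - α))
  rcases eq_or_ne S ⊤ with hS | hS
  · rw [hS, ENNReal.mul_top (by positivity)]
    exact le_top
  calc holderSemi α (ball x₀ (2 ^ (-(k : ℝ)))) (fun x => u x - ⟪g, x⟫)
      = holderSemi α (ball x₀ (2 ^ (-(k : ℝ)))) (fun x => (u x - ⟪b 0, x⟫) - ⟪g - b 0, x⟫) := by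
        simp only [inner_sub_left, sub_sub_sub_cancel_right]
    _ ≤ holderSemi α (ball x₀ (2 ^ (-(k : ℝ)))) (fun x => u x - ⟪b 0, x⟫) + edist (b 0) g * c := by
        rw [edist_comm, edist_eq_enorm_sub]
        exact (holderSemi_sub_le _ _).trans (add_le_add le_rfl (holderSemi_ball_inner_le hα _))
    _ ≤ S + θ ^ (k + 1) * (2 * S) * c := by
        refine add_le_add ?_ (mul_le_mul_left ?_ _)
        · refine le_trans (le_of_eq ?_) (ENNReal.le_tsum 0)
          simp
        · exact edist_le_pow_mul_tsum_of_tendsto hα u x₀ k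
            (tendsto_gradient_of_tsum_pow_mul_holderSemi_dyadic_ne_top hu hα x₀ k hS)
    _ = S + 2 * θ * (θ ^ k * c) * S := by ring
    _ = (1 + 2 * θ ^ 2) * S := by
        rw [ofReal_two_rpow_pow_mul_ofReal_two_mul_two_rpow_neg]
        ring

end Dyadic

theorem ENNReal.iInf_tsum_le_tsum_iInf {β : Type*} [Nonempty β] (f : ℕ → β → ℝ≥0∞) :
    ⨅ c : ℕ → β, ∑' m, f m (c m) ≤ ∑' m, ⨅ b, f m b := by
  refine ENNReal.le_of_forall_pos_le_add fun ε hε _ => ?_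
  obtain ⟨δ, hδ, hδε⟩ := ENNReal.exists_pos_sum_of_countable (ENNReal.coe_ne_zero.2 hε.ne') ℕ
  have hc : ∀ m, ∃ b, f m b ≤ (⨅ b, f m b) + δ m := fun m => by
    rcases eq_or_ne (⨅ b, f m b) ⊤ with h | h
    · exact ⟨Classical.arbitrary β, by simp [h]⟩
    · obtain ⟨b, hb⟩ := iInf_lt_iff.1 (ENNReal.lt_add_right h (ENNReal.coe_ne_zero.2 (hδ m).ne'))
      exact ⟨b, hb.le⟩
  choose c hc using hc
  calc ⨅ c : ℕ → β, ∑' m, f m (c m) ≤ ∑' m, f m (c m) := iInf_le _ c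
    _ ≤ ∑' m, ((⨅ b, f m b) + δ m) := ENNReal.tsum_le_tsum hc
    _ = (∑' m, ⨅ b, f m b) + ∑' m, (δ m : ℝ≥0∞) := ENNReal.tsum_add
    _ ≤ (∑' m, ⨅ b, f m b) + ε := by gcongr

theorem ENNReal.tsum_pow_mul_le_of_le_tsum_shift {l θ C : ℝ≥0∞} (hl₀ : l ≠ 0) (hl : l ≠ ⊤)
    {H T : ℕ → ℝ≥0∞} (h : ∀ k, H k ≤ C * ∑' m, θ ^ m * T (k + m)) :
    ∑' k, l ^ k * H k ≤ C * (∑' m, (θ / l) ^ m) * ∑' k, l ^ k * T k := by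
  have hpow : ∀ k m, l ^ k * θ ^ m = (θ / l) ^ m * l ^ (k + m) := fun k m => by
    rw [pow_add, mul_left_comm, ← mul_pow, ENNReal.div_mul_cancel hl₀ hl]
  calc ∑' k, l ^ k * H k ≤ ∑' k, l ^ k * (C * ∑' m, θ ^ m * T (k + m)) :=
        ENNReal.tsum_le_tsum fun k => mul_le_mul_right (h k) _
    _ = C * ∑' m, (θ / l) ^ m * ∑' k, l ^ (k + m) * T (k + m) := by
        simp_rw [← ENNReal.tsum_mul_left]
        rw [ENNReal.tsum_comm]
        congr 1; ext m; congr 1; ext k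
        rw [← mul_assoc (_ ^ m), ← hpow]
        ring
    _ ≤ C * ∑' m, (θ / l) ^ m * ∑' j, l ^ j * T j := by
        refine mul_le_mul_right (ENNReal.tsum_le_tsum fun m => mul_le_mul_right ?_ _) _
        exact ENNReal.tsum_comp_le_tsum_of_injective (add_left_injective m) fun j => l ^ j * T j
    _ = C * (∑' m, (θ / l) ^ m) * ∑' k, l ^ k * T k := by
        rw [ENNReal.tsum_mul_right, mul_assoc]

theorem holderSemi_dyadic_ball_sub_taylor_le {F : Type*} [NormedAddCommGroup F]
    [InnerProductSpace ℝ F] [CompleteSpace F] {α : ℝ} {u : F → ℝ} (hu : ContDiff ℝ 1 u)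
    (hα : α ≤ 1) (x₀ : F) (k : ℕ) :
    holderSemi α (ball x₀ (2 ^ (-(k : ℝ)))) (fun x => u x - (u x₀ + ⟪gradient u x₀, x - x₀⟫)) ≤
      (1 + 2 * ENNReal.ofReal (2 ^ (1 - α)) ^ 2) * ∑' m, ENNReal.ofReal (2 ^ (1 - α)) ^ m *
        ⨅ (a₀ : ℝ) (b : F),
          holderSemi α (ball x₀ (2 ^ (-((k + m : ℕ) : ℝ)))) (fun x => u x - (a₀ + ⟪b, x⟫)) := by
  set θ := ENNReal.ofReal (2 ^ (1 - α))
  have hθ₀ : θ ≠ 0 := (ENNReal.ofReal_pos.2 (by positivity)).ne'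
  have hθ : θ ≠ ⊤ := ENNReal.ofReal_ne_top
  simp only [holderSemi_sub_const_add, holderSemi_sub_inner_sub, iInf_const]
  calc _ ≤ ⨅ c : ℕ → F, (1 + 2 * θ ^ 2) * ∑' m, θ ^ m *
        holderSemi α (ball x₀ (2 ^ (-((k + m : ℕ) : ℝ)))) (fun x => u x - ⟪c m, x⟫) :=
        le_iInf (holderSemi_dyadic_ball_sub_gradient_le_tsum hu hα x₀ k)
    _ = (1 + 2 * θ ^ 2) * ⨅ c : ℕ → F, ∑' m, θ ^ m *
        holderSemi α (ball x₀ (2 ^ (-((k + m : ℕ) : ℝ)))) (fun x => u x - ⟪c m, x⟫) :=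
        (ENNReal.mul_iInf_of_ne (by positivity) (ENNReal.add_ne_top.2
          ⟨ENNReal.one_ne_top, ENNReal.mul_ne_top ENNReal.ofNat_ne_top (ENNReal.pow_ne_top hθ)⟩)).symm
    _ ≤ (1 + 2 * θ ^ 2) * ∑' m, ⨅ b : F, θ ^ m *
        holderSemi α (ball x₀ (2 ^ (-((k + m : ℕ) : ℝ)))) (fun x => u x - ⟪b, x⟫) :=
        mul_le_mul_right (ENNReal.iInf_tsum_le_tsum_iInf _) _
    _ = _ := by
        simp_rw [ENNReal.mul_iInf_of_ne (pow_ne_zero _ hθ₀) (ENNReal.pow_ne_top hθ)]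

theorem taylor_series_le_affine_series_general
    (d : ℕ) (α σ : ℝ) (hα1 : α < 1)
    (hσ1 : 1 < σ) :
    ∃ C : ℝ, 0 < C ∧
      ∀ u : EuclideanSpace ℝ (Fin d) → ℝ, ContDiff ℝ 1 u →
        (∑' k : ℕ, ENNReal.ofReal ((2:ℝ) ^ ((k:ℝ) * (σ - α))) *
            ⨆ x0 : EuclideanSpace ℝ (Fin d),
              holderSemi α (ball x0 ((2:ℝ) ^ (-(k:ℝ))))
                (fun x => u x - (u x0 + (inner ℝ (gradient u x0) (x - x0) : ℝ)))) ≤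
          ENNReal.ofReal C *
            ∑' k : ℕ, ENNReal.ofReal ((2:ℝ) ^ ((k:ℝ) * (σ - α))) *
              ⨆ x0 : EuclideanSpace ℝ (Fin d),
                ⨅ (a0 : ℝ) (b : EuclideanSpace ℝ (Fin d)),
                  holderSemi α (ball x0 ((2:ℝ) ^ (-(k:ℝ))))
                    (fun x => u x - (a0 + (inner ℝ b x : ℝ))) := by
  have hq : (2 : ℝ) ^ (1 - σ) < 1 := Real.rpow_lt_one_of_one_lt_of_neg one_lt_two (by linarith)
  have hq' : 0 < 1 - (2 : ℝ) ^ (1 - σ) := sub_pos.2 hq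
  refine ⟨(1 + 2 * (2 ^ (1 - α)) ^ 2) * (1 - 2 ^ (1 - σ))⁻¹, by positivity, fun u hu => ?_⟩
  have hweight : ∀ k : ℕ, ENNReal.ofReal (2 ^ ((k : ℝ) * (σ - α))) =
      ENNReal.ofReal (2 ^ (σ - α)) ^ k := fun k => by
    rw [mul_comm, Real.rpow_mul_natCast zero_le_two, ENNReal.ofReal_pow (by positivity)]
  have hratio : ENNReal.ofReal (2 ^ (1 - α)) / ENNReal.ofReal (2 ^ (σ - α)) =
      ENNReal.ofReal (2 ^ (1 - σ)) := by
    rw [← ENNReal.ofReal_div_of_pos (by positivity), ← Real.rpow_sub two_pos]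
    ring_nf
  have hC : ENNReal.ofReal ((1 + 2 * (2 ^ (1 - α)) ^ 2) * (1 - 2 ^ (1 - σ))⁻¹) =
      (1 + 2 * ENNReal.ofReal (2 ^ (1 - α)) ^ 2) *
        ∑' m, (ENNReal.ofReal (2 ^ (1 - α)) / ENNReal.ofReal (2 ^ (σ - α))) ^ m := by
    rw [hratio, ENNReal.tsum_geometric, ENNReal.ofReal_mul (by positivity),
      ENNReal.ofReal_inv_of_pos hq', ENNReal.ofReal_sub _ (by positivity),
      ENNReal.ofReal_add zero_le_one (by positivity), ENNReal.ofReal_mul zero_le_two,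
      ENNReal.ofReal_pow (by positivity)]
    simp
  simp only [hweight, hC]
  refine ENNReal.tsum_pow_mul_le_of_le_tsum_shift (ENNReal.ofReal_pos.2 (by positivity)).ne'
    ENNReal.ofReal_ne_top fun k => iSup_le fun x0 => ?_
  refine (holderSemi_dyadic_ball_sub_taylor_le hu hα1.le x0 k).trans ?_
  exact mul_le_mul_right
    (ENNReal.tsum_le_tsum fun m => mul_le_mul_right (le_iSup_of_le x0 le_rfl) _) _

/-- Lemma 2.4, first part: the Taylor-polynomial approximation series is controlled by the
series of best affine approximations. -/
theorem taylor_series_le_affine_series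
    (d : ℕ) (hd : 1 ≤ d) (α σ : ℝ) (hα : 0 < α) (hα1 : α < 1)
    (hσ1 : 1 < σ) (hσ2 : σ < 2) :
    ∃ C : ℝ, 0 < C ∧
      ∀ u : EuclideanSpace ℝ (Fin d) → ℝ, ContDiff ℝ 1 u →
        (∑' k : ℕ, ENNReal.ofReal ((2:ℝ) ^ ((k:ℝ) * (σ - α))) *
            ⨆ x0 : EuclideanSpace ℝ (Fin d),
              holderSemi α (ball x0 ((2:ℝ) ^ (-(k:ℝ))))
                (fun x => u x - (u x0 + (inner ℝ (gradient u x0) (x - x0) : ℝ)))) ≤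
          ENNReal.ofReal C *
            ∑' k : ℕ, ENNReal.ofReal ((2:ℝ) ^ ((k:ℝ) * (σ - α))) *
              ⨆ x0 : EuclideanSpace ℝ (Fin d),
                ⨅ (a0 : ℝ) (b : EuclideanSpace ℝ (Fin d)),
                  holderSemi α (ball x0 ((2:ℝ) ^ (-(k:ℝ))))
                    (fun x => u x - (a0 + (inner ℝ b x : ℝ))) :=
  taylor_series_le_affine_series_general d α σ hα1 hσ1
end
end

section
/- Let α ∈ (0,1) and σ ∈ (1,2). There exists a constant C > 0 depending only on d, α, σ such that for every continuously differentiable u : ℝ^d → ℝ, Σ_{k=0}^∞ 2^{kσ} sup_{x_0∈ℝ^d} ‖u − P_{x_0}u‖_{L_∞(B_{2^{−k}}(x_0))} ≤ C Σ_{k=0}^∞ 2^{k(σ−α)} sup_{x_0∈ℝ^d} [u]_{Λ^α(B_{2^{−k}}(x_0))}, the inequality being understood in [0,∞]. -/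
/-! Fix `x = x₀ + h` with `‖h‖ < 2⁻ᵏ`. The dyadic difference quotients
`2ʲ (u (x₀ + 2⁻ʲ h) - u x₀)` converge to `∇u(x₀) · h`, and consecutive ones differ by `2ʲ` times
a second difference of `u` with step `2⁻ʲ⁻¹ h`, which lies in a ball of radius `2⁻ᵏ⁻ʲ`.
Telescoping bounds the Taylor remainder at scale `k` by `∑ⱼ 2ʲ 2^{-α(k+j+1)} [u]_{Λ^α}` at scale
`k + j`; after weighting by `2^{kσ}` and exchanging the sums, what is left is the geometric factor
`∑ⱼ 2^{j(1-σ)}`, finite because `σ > 1`. -/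

open MeasureTheory Metric Filter Set
open scoped ENNReal Topology

noncomputable section

def secondDiff {E : Type*} [AddCommGroup E] (u : E → ℝ) (x h : E) : ℝ :=
  u (x + h) + u (x - h) - 2 * u x

lemma ofReal_abs_secondDiff_le_zygmundSemi_mul {E : Type*} [NormedAddCommGroup E] {α r : ℝ}
    {u : E → ℝ} {x h : E} (hr : ‖h‖ < r) :
    ENNReal.ofReal |secondDiff u x h| ≤
      zygmundSemi α (ball x r) u * ENNReal.ofReal (‖h‖ ^ α) := by
  rcases eq_or_ne h 0 with rfl | hh
  · simp [secondDiff, two_mul]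
  have hpow : 0 < ‖h‖ ^ α := Real.rpow_pos_of_pos (norm_pos_iff.mpr hh) α
  have hx : x ∈ ball x r := mem_ball_self ((norm_nonneg h).trans_lt hr)
  have hxp : x + h ∈ ball x r := by simpa [mem_ball, dist_eq_norm] using hr
  have hxm : x - h ∈ ball x r := by simpa [mem_ball, dist_eq_norm] using hr
  calc ENNReal.ofReal |secondDiff u x h|
      = ENNReal.ofReal (|secondDiff u x h| / ‖h‖ ^ α) * ENNReal.ofReal (‖h‖ ^ α) := by
        rw [← ENNReal.ofReal_mul (by positivity), div_mul_cancel₀ _ hpow.ne']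
    _ ≤ zygmundSemi α (ball x r) u * ENNReal.ofReal (‖h‖ ^ α) := by
        gcongr
        exact le_iSup_of_le x <| le_iSup_of_le h <| le_iSup_of_le hh <| le_iSup_of_le hx <|
          le_iSup_of_le hxp <| le_iSup_of_le hxm le_rfl

section Taylor

variable {E : Type*} [NormedAddCommGroup E] [NormedSpace ℝ E] {u : E → ℝ} {x₀ : E}

lemma tendsto_dyadic_slope (hu : DifferentiableAt ℝ u x₀) (h : E) :
    Tendsto (fun j : ℕ => 2 ^ j * (u (x₀ + (2⁻¹ : ℝ) ^ j • h) - u x₀)) atTop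
      (𝓝 (fderiv ℝ u x₀ h)) := by
  have hscale : Tendsto (fun j : ℕ => (2⁻¹ : ℝ) ^ j) atTop (𝓝[≠] 0) :=
    (tendsto_pow_atTop_nhdsWithin_zero_of_lt_one (by norm_num) (by norm_num)).mono_right
      (nhdsGT_le_nhdsNE 0)
  simpa [Function.comp_def, inv_pow] using
    (hu.hasFDerivAt.hasLineDerivAt h).tendsto_slope_zero.comp hscale

lemma ofReal_abs_sub_fderiv_le_tsum_secondDiff (hu : DifferentiableAt ℝ u x₀) (h : E) :
    ENNReal.ofReal |u (x₀ + h) - u x₀ - fderiv ℝ u x₀ h| ≤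
      ∑' j : ℕ, ENNReal.ofReal
        (2 ^ j * |secondDiff u (x₀ + (2⁻¹ : ℝ) ^ (j + 1) • h) ((2⁻¹ : ℝ) ^ (j + 1) • h)|) := by
  set g : ℕ → ℝ := fun j => 2 ^ j * (u (x₀ + (2⁻¹ : ℝ) ^ j • h) - u x₀)
  have hstep : ∀ j, |g j - g (j + 1)| =
      2 ^ j * |secondDiff u (x₀ + (2⁻¹ : ℝ) ^ (j + 1) • h) ((2⁻¹ : ℝ) ^ (j + 1) • h)| := by
    intro j
    rw [← abs_two, ← abs_pow, ← abs_mul, abs_two]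
    congr 1
    have hsplit : (2⁻¹ : ℝ) ^ j • h = (2⁻¹ : ℝ) ^ (j + 1) • h + (2⁻¹ : ℝ) ^ (j + 1) • h := by
      rw [← add_smul]; congr 1; ring
    simp only [g, secondDiff]
    rw [hsplit, ← add_assoc, add_sub_cancel_right, pow_succ]
    ring
  have key := edist_le_tsum_of_edist_le_of_tendsto₀ (f := g) _
    (fun j => by rw [edist_dist, Real.dist_eq, Nat.succ_eq_add_one, hstep])
    (tendsto_dyadic_slope hu h)
  have hg0 : g 0 = u (x₀ + h) - u x₀ := by simp [g]
  rwa [edist_dist, Real.dist_eq, hg0] at key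

end Taylor

def zygmundSup {E : Type*} [NormedAddCommGroup E] (α : ℝ) (u : E → ℝ) (r : ℝ) : ℝ≥0∞ :=
  ⨆ x₀ : E, zygmundSemi α (ball x₀ r) u

def taylorRemainderSup {E : Type*} [NormedAddCommGroup E] [InnerProductSpace ℝ E]
    [CompleteSpace E] (u : E → ℝ) (r : ℝ) : ℝ≥0∞ :=
  ⨆ x₀ : E, eSupNorm (ball x₀ r) (fun x => u x - (u x₀ + (inner ℝ (gradient u x₀) (x - x₀) : ℝ)))

section Hilbert

variable {E : Type*} [NormedAddCommGroup E] [InnerProductSpace ℝ E] [CompleteSpace E]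
  {α : ℝ} {u : E → ℝ}

lemma taylorRemainderSup_le_tsum (hα : 0 ≤ α) (hu : Differentiable ℝ u) (r : ℝ) :
    taylorRemainderSup u r ≤
      ∑' j : ℕ, ENNReal.ofReal (2 ^ j * ((2⁻¹ : ℝ) ^ (j + 1) * r) ^ α) *
        zygmundSup α u ((2⁻¹ : ℝ) ^ j * r) := by
  refine iSup_le fun x₀ => iSup₂_le fun x hx => ?_
  dsimp only
  obtain ⟨h, rfl⟩ : ∃ h, x = x₀ + h := ⟨x - x₀, by abel⟩
  have hr : ‖h‖ < r := by simpa [dist_eq_norm] using hx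
  rw [add_sub_cancel_left, inner_gradient_left, ← sub_sub]
  refine (ofReal_abs_sub_fderiv_le_tsum_secondDiff (hu x₀) h).trans
    (ENNReal.tsum_le_tsum fun j => ?_)
  set δ := (2⁻¹ : ℝ) ^ (j + 1) • h
  have hδ : ‖δ‖ < (2⁻¹ : ℝ) ^ (j + 1) * r := by
    rw [norm_smul, norm_pow, norm_inv, Real.norm_two]
    gcongr
  have hδr : ‖δ‖ < (2⁻¹ : ℝ) ^ j * r := by
    refine hδ.trans_le ?_
    rw [pow_succ, mul_assoc]
    have hr₀ : 0 ≤ r := (norm_nonneg h).trans hr.le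
    gcongr
    linarith
  calc ENNReal.ofReal (2 ^ j * |secondDiff u (x₀ + δ) δ|)
      = ENNReal.ofReal (2 ^ j) * ENNReal.ofReal |secondDiff u (x₀ + δ) δ| :=
        ENNReal.ofReal_mul (by positivity)
    _ ≤ ENNReal.ofReal (2 ^ j) * (zygmundSup α u ((2⁻¹ : ℝ) ^ j * r) *
          ENNReal.ofReal (((2⁻¹ : ℝ) ^ (j + 1) * r) ^ α)) := by
        grw [ofReal_abs_secondDiff_le_zygmundSemi_mul hδr]
        gcongr
        exact le_iSup (fun c => zygmundSemi α (ball c ((2⁻¹ : ℝ) ^ j * r)) u) (x₀ + δ)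
    _ = ENNReal.ofReal (2 ^ j * ((2⁻¹ : ℝ) ^ (j + 1) * r) ^ α) *
          zygmundSup α u ((2⁻¹ : ℝ) ^ j * r) := by
        rw [ENNReal.ofReal_mul (by positivity)]
        ring

end Hilbert

lemma tsum_tsum_mul_add_le (b a : ℕ → ℝ≥0∞) :
    ∑' k, ∑' j, b j * a (k + j) ≤ (∑' j, b j) * ∑' m, a m := by
  rw [ENNReal.tsum_comm, ← ENNReal.tsum_mul_right]
  refine ENNReal.tsum_le_tsum fun j => ?_
  rw [ENNReal.tsum_mul_left]
  exact mul_le_mul_right (ENNReal.tsum_comp_le_tsum_of_injective (add_left_injective j) a) _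

lemma tsum_ofReal_mul_geometric {c q : ℝ} (hc : 0 ≤ c) (hq₀ : 0 ≤ q) (hq₁ : q < 1) :
    ∑' j : ℕ, ENNReal.ofReal (c * q ^ j) = ENNReal.ofReal (c * (1 - q)⁻¹) := by
  rw [← ENNReal.ofReal_tsum_of_nonneg (fun j => by positivity)
    ((summable_geometric_of_lt_one hq₀ hq₁).mul_left c), tsum_mul_left,
    tsum_geometric_of_lt_one hq₀ hq₁]

lemma two_inv_pow_eq_rpow (n : ℕ) : (2⁻¹ : ℝ) ^ n = 2 ^ (-(n : ℝ)) := by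
  rw [Real.rpow_neg zero_le_two, Real.rpow_natCast, inv_pow]

lemma dyadic_weight_eq (α σ : ℝ) (k j : ℕ) :
    (2 : ℝ) ^ ((k : ℝ) * σ) * (2 ^ j * ((2⁻¹ : ℝ) ^ (j + 1) * 2 ^ (-(k : ℝ))) ^ α) =
      2 ^ (-α) * ((2 : ℝ) ^ (1 - σ)) ^ j * 2 ^ (((k + j : ℕ) : ℝ) * (σ - α)) := by
  rw [two_inv_pow_eq_rpow, ← Real.rpow_add two_pos, ← Real.rpow_mul zero_le_two,
    ← Real.rpow_natCast, ← Real.rpow_natCast, ← Real.rpow_mul zero_le_two]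
  simp only [← Real.rpow_add two_pos]
  congr 1
  push_cast
  ring

lemma two_inv_pow_mul_rpow_neg (k j : ℕ) :
    (2⁻¹ : ℝ) ^ j * 2 ^ (-(k : ℝ)) = 2 ^ (-((k + j : ℕ) : ℝ)) := by
  rw [two_inv_pow_eq_rpow, ← Real.rpow_add two_pos]
  congr 1
  push_cast
  ring

lemma ofReal_mul_taylorRemainderSup_le {E : Type*} [NormedAddCommGroup E]
    [InnerProductSpace ℝ E] [CompleteSpace E] {α : ℝ} (hα : 0 ≤ α) {u : E → ℝ}
    (hu : Differentiable ℝ u) (σ : ℝ) (k : ℕ) :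
    ENNReal.ofReal (2 ^ ((k : ℝ) * σ)) * taylorRemainderSup u (2 ^ (-(k : ℝ))) ≤
      ∑' j : ℕ, ENNReal.ofReal (2 ^ (-α) * ((2 : ℝ) ^ (1 - σ)) ^ j) *
        (ENNReal.ofReal (2 ^ (((k + j : ℕ) : ℝ) * (σ - α))) *
          zygmundSup α u (2 ^ (-((k + j : ℕ) : ℝ)))) := by
  grw [taylorRemainderSup_le_tsum hα hu, ← ENNReal.tsum_mul_left]
  refine le_of_eq (tsum_congr fun j => ?_)
  rw [← mul_assoc, ← mul_assoc, ← ENNReal.ofReal_mul (by positivity),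
    ← ENNReal.ofReal_mul (by positivity), dyadic_weight_eq, two_inv_pow_mul_rpow_neg]

theorem taylor_sup_series_le_zygmund_series_general
    (d : ℕ) (α σ : ℝ) (hα : 0 < α)
    (hσ1 : 1 < σ) :
    ∃ C : ℝ, 0 < C ∧
      ∀ u : EuclideanSpace ℝ (Fin d) → ℝ, ContDiff ℝ 1 u →
        (∑' k : ℕ, ENNReal.ofReal ((2:ℝ) ^ ((k:ℝ) * σ)) *
            ⨆ x0 : EuclideanSpace ℝ (Fin d),
              eSupNorm (ball x0 ((2:ℝ) ^ (-(k:ℝ))))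
                (fun x => u x - (u x0 + (inner ℝ (gradient u x0) (x - x0) : ℝ)))) ≤
          ENNReal.ofReal C *
            ∑' k : ℕ, ENNReal.ofReal ((2:ℝ) ^ ((k:ℝ) * (σ - α))) *
              ⨆ x0 : EuclideanSpace ℝ (Fin d),
                zygmundSemi α (ball x0 ((2:ℝ) ^ (-(k:ℝ)))) u := by
  set q : ℝ := 2 ^ (1 - σ)
  have hq₀ : 0 ≤ q := by positivity
  have hq₁ : q < 1 := Real.rpow_lt_one_of_one_lt_of_neg one_lt_two (by linarith)
  have hq : 0 < 1 - q := by linarith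
  refine ⟨2 ^ (-α) * (1 - q)⁻¹, by positivity, fun u hu => ?_⟩
  calc ∑' k : ℕ, ENNReal.ofReal ((2:ℝ) ^ ((k:ℝ) * σ)) * taylorRemainderSup u (2 ^ (-(k:ℝ)))
      ≤ ∑' k : ℕ, ∑' j : ℕ, ENNReal.ofReal (2 ^ (-α) * q ^ j) *
          (ENNReal.ofReal (2 ^ (((k + j : ℕ) : ℝ) * (σ - α))) *
            zygmundSup α u (2 ^ (-((k + j : ℕ) : ℝ)))) :=
        ENNReal.tsum_le_tsum
          (ofReal_mul_taylorRemainderSup_le hα.le (hu.differentiable one_ne_zero) σ)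
    _ ≤ (∑' j : ℕ, ENNReal.ofReal (2 ^ (-α) * q ^ j)) *
          ∑' m : ℕ, ENNReal.ofReal (2 ^ ((m : ℝ) * (σ - α))) * zygmundSup α u (2 ^ (-(m : ℝ))) :=
        tsum_tsum_mul_add_le _ _
    _ = _ := by rw [tsum_ofReal_mul_geometric (by positivity) hq₀ hq₁]; rfl

/-- Lemma 2.4, second part: the `L_∞` Taylor-remainder series is controlled by the series of
Zygmund seminorms. -/
theorem taylor_sup_series_le_zygmund_series
    (d : ℕ) (hd : 1 ≤ d) (α σ : ℝ) (hα : 0 < α) (hα1 : α < 1)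
    (hσ1 : 1 < σ) (hσ2 : σ < 2) :
    ∃ C : ℝ, 0 < C ∧
      ∀ u : EuclideanSpace ℝ (Fin d) → ℝ, ContDiff ℝ 1 u →
        (∑' k : ℕ, ENNReal.ofReal ((2:ℝ) ^ ((k:ℝ) * σ)) *
            ⨆ x0 : EuclideanSpace ℝ (Fin d),
              eSupNorm (ball x0 ((2:ℝ) ^ (-(k:ℝ))))
                (fun x => u x - (u x0 + (inner ℝ (gradient u x0) (x - x0) : ℝ)))) ≤
          ENNReal.ofReal C *
            ∑' k : ℕ, ENNReal.ofReal ((2:ℝ) ^ ((k:ℝ) * (σ - α))) *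
              ⨆ x0 : EuclideanSpace ℝ (Fin d),
                zygmundSemi α (ball x0 ((2:ℝ) ^ (-(k:ℝ)))) u :=
  taylor_sup_series_le_zygmund_series_general d α σ hα hσ1
end
end
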